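/- arXiv:1608.06975 — 6 statements merged into one kernel-verified Lean document; each statement's English description precedes it below -/
import Mathlib

section
/- (Cubic growth in α.) There exists a universal constant C > 0 such that for every h ∈ [0, 1), writing α = arccos h ∈ (0, π/2], one has ℰ_h(α/π) ≤ C α³. -/
open Real MeasureTheory Filter Topology
open scoped ENNReal NNReal

noncomputable section

/-- `k = min {h, 1}`. -/
def kparam (h : ℝ) : ℝ := min h 1

/-- `α = arccos k ∈ [0, π/2]`. -/
def alphaParam (h : ℝ) : ℝ := Real.arccos (kparam h)

/-- The anisotropy potential `W_h(θ) = (1/2)(cos²θ − 2h cos θ + 2hk − k²)`. -/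
def Wpot (h θ : ℝ) : ℝ :=
  (1/2) * ((Real.cos θ)^2 - 2*h*Real.cos θ + 2*h*(kparam h) - (kparam h)^2)

/-- The set `2πℤ + {−α, α}` of allowed limits at `±∞`. -/
def limSet (h : ℝ) : Set ℝ :=
  {y | ∃ n : ℤ, y = 2*Real.pi*n + alphaParam h ∨ y = 2*Real.pi*n - alphaParam h}

/-- The total energy `E_h(φ)`, valued in `[0, ∞]`:
exchange + anisotropy energy plus the stray-field (homogeneous `H^{1/2}`) energy. -/
def energy (h : ℝ) (φ : ℝ → ℝ) : ℝ≥0∞ :=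
  ENNReal.ofReal (1/2) *
      (∫⁻ x : ℝ, ENNReal.ofReal ((deriv φ x)^2 + 2 * Wpot h (φ x))) +
    ENNReal.ofReal (1/(4*Real.pi)) *
      (∫⁻ s : ℝ, ∫⁻ t : ℝ,
        ENNReal.ofReal ((Real.cos (φ s) - Real.cos (φ t))^2 / (s - t)^2))

/-- An admissible phase: `C¹`, limits at `±∞` in `2πℤ + {−α, α}`, finite energy. -/
def Admissible (h : ℝ) (φ : ℝ → ℝ) : Prop :=
  ContDiff ℝ 1 φ ∧
    (∃ L ∈ limSet h, Tendsto φ atTop (𝓝 L)) ∧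
    (∃ L ∈ limSet h, Tendsto φ atBot (𝓝 L)) ∧
    energy h φ < ⊤

/-- The winding number `deg(φ) = (φ(+∞) − φ(−∞))/(2π)`. -/
def deg (φ : ℝ → ℝ) : ℝ :=
  (limUnder atTop φ - limUnder atBot φ) / (2*Real.pi)

/-- `𝒜_h(d)`: admissible phases of winding number `d`. -/
def AA (h d : ℝ) : Set (ℝ → ℝ) := {φ | Admissible h φ ∧ deg φ = d}

/-- `ℰ_h(d) = inf {E_h(φ) : φ ∈ 𝒜_h(d)}`. -/
def Einf (h d : ℝ) : ℝ≥0∞ := ⨅ φ ∈ AA h d, energy h φ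

/-- `D_α = {n + j·α/π : n ∈ ℤ, j ∈ {−1, 0, 1}}`. -/
def Dset (h : ℝ) : Set ℝ :=
  {d | ∃ n j : ℤ, (j = -1 ∨ j = 0 ∨ j = 1) ∧ d = n + j * alphaParam h / Real.pi}


/-!
Test the infimum with a smooth kink `φ` rising from `-α` to `α` across `[-1/α, 1/α]` with
slope `O(α²)`. There `φ'² = O(α⁴)` and `2W_h(φ) = (cos φ - cos α)² ≤ (1 - cos α)² ≤ α⁴/4`, so
the local energy is `O(α⁴) · 2/α = O(α³)`. The function `cos φ` is `L`-Lipschitz with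
`L = O(α³)`, oscillates by at most `δ = α²/2`, and is constant off `[-1/α, 1/α]`. The first two
facts bound its squared difference quotient at distance `u` by the Cauchy kernel
`2δ² / ((δ/L)² + u²)`, of mass `2πδL = O(α⁵)`; the third confines the double integral to a
strip of width `2/α`, so the stray-field energy is `O(α⁴)`.
-/

open Set

lemma deriv_smoothTransition_eq_zero {y : ℝ} (hy : y ≤ 0 ∨ 1 ≤ y) :
    deriv smoothTransition y = 0 := by
  rcases hy with hy | hy
  · refine IsLocalMin.deriv_eq_zero (Eventually.of_forall fun x => ?_)
    rw [smoothTransition.zero_of_nonpos hy]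
    exact smoothTransition.nonneg x
  · refine IsLocalMax.deriv_eq_zero (Eventually.of_forall fun x => ?_)
    rw [smoothTransition.one_of_one_le hy]
    exact smoothTransition.le_one x

lemma exists_abs_deriv_smoothTransition_le :
    ∃ M : ℝ, 0 < M ∧ ∀ y, |deriv smoothTransition y| ≤ M := by
  have hsupp : HasCompactSupport (deriv smoothTransition) :=
    HasCompactSupport.intro (isCompact_Icc (a := 0) (b := 1)) fun y hy =>
      deriv_smoothTransition_eq_zero <| by
        rw [mem_Icc, not_and_or, not_le, not_le] at hy
        exact hy.imp le_of_lt le_of_lt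
  obtain ⟨C, hC⟩ :=
    ((smoothTransition.contDiff (n := 1)).continuous_deriv le_rfl).bounded_above_of_compact_support
      hsupp
  exact ⟨max C 1, by positivity, fun y => (hC y).trans (le_max_left _ _)⟩

lemma lintegral_ofReal_div_sq_add_sq {r c : ℝ} (hr : 0 < r) (hc : 0 ≤ c) :
    ∫⁻ u : ℝ, ENNReal.ofReal (c / (r ^ 2 + u ^ 2)) = ENNReal.ofReal (c * π / r) := by
  lift r to ℝ≥0 using hr.le
  have hpdf : ∀ u : ℝ, ENNReal.ofReal (c / (r ^ 2 + u ^ 2)) =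
      ENNReal.ofReal (c * π / r) * ProbabilityTheory.cauchyPDF 0 r u := by
    intro u
    rw [ProbabilityTheory.cauchyPDF_def, ProbabilityTheory.cauchyPDFReal_def,
      ← ENNReal.ofReal_mul (by positivity)]
    congr 1
    field_simp
    ring
  rw [lintegral_congr hpdf, lintegral_const_mul' _ _ ENNReal.ofReal_ne_top,
    ProbabilityTheory.lintegral_cauchyPDF_eq_one 0 (by exact_mod_cast hr.ne'), mul_one]

lemma sq_div_sq_le_of_abs_le {d u L δ : ℝ} (hL : 0 < L) (hδ : 0 < δ)
    (hLip : |d| ≤ L * |u|) (hosc : |d| ≤ δ) :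
    d ^ 2 / u ^ 2 ≤ 2 * δ ^ 2 / ((δ / L) ^ 2 + u ^ 2) := by
  rcases eq_or_ne u 0 with rfl | hu
  · simp only [ne_eq, OfNat.ofNat_ne_zero, not_false_eq_true, zero_pow, div_zero]
    positivity
  have hd_lip : d ^ 2 ≤ L ^ 2 * u ^ 2 := by
    simpa only [sq_abs, mul_pow] using pow_le_pow_left₀ (abs_nonneg d) hLip 2
  have hd_osc : d ^ 2 ≤ δ ^ 2 := by
    simpa only [sq_abs] using pow_le_pow_left₀ (abs_nonneg d) hosc 2
  have hd_lip' : d ^ 2 * (δ / L) ^ 2 ≤ δ ^ 2 * u ^ 2 :=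
    calc d ^ 2 * (δ / L) ^ 2 ≤ L ^ 2 * u ^ 2 * (δ / L) ^ 2 := by gcongr
      _ = δ ^ 2 * u ^ 2 := by field_simp
  rw [div_le_div_iff₀ (by positivity) (by positivity)]
  nlinarith [mul_le_mul_of_nonneg_right hd_osc (sq_nonneg u)]

lemma lintegral_lintegral_indicator_mul_le {I : Set ℝ} (hI : MeasurableSet I)
    {k : ℝ → ℝ → ℝ≥0∞} {c : ℝ≥0∞} (hk : ∀ s, ∫⁻ t, k s t ≤ c) :
    ∫⁻ s, ∫⁻ t, I.indicator 1 s * k s t ≤ volume I * c := by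
  calc ∫⁻ s, ∫⁻ t, I.indicator 1 s * k s t
      = ∫⁻ s, I.indicator 1 s * ∫⁻ t, k s t := by
        refine lintegral_congr fun s => lintegral_const_mul' _ _ ?_
        by_cases hs : s ∈ I <;> simp [hs]
    _ ≤ ∫⁻ s, I.indicator 1 s * c := by gcongr with s; exact hk s
    _ = volume I * c := by
        rw [lintegral_mul_const _ (measurable_one.indicator hI), lintegral_indicator_one hI]

lemma lintegral_lintegral_le_of_le_comp_sub {I : Set ℝ} (hI : MeasurableSet I)
    {F : ℝ → ℝ → ℝ≥0∞} {m : ℝ → ℝ≥0∞} (hm : Measurable m)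
    (hFm : ∀ s t, F s t ≤ m (s - t)) (hF0 : ∀ s t, s ∉ I → t ∉ I → F s t = 0) :
    ∫⁻ s, ∫⁻ t, F s t ≤ 2 * volume I * ∫⁻ u, m u := by
  have hind : Measurable (I.indicator (1 : ℝ → ℝ≥0∞)) := measurable_const.indicator hI
  have hF : ∀ s t, F s t ≤ I.indicator 1 s * m (s - t) + I.indicator 1 t * m (s - t) := by
    intro s t
    by_cases hs : s ∈ I
    · simpa [hs] using le_add_right (hFm s t)
    by_cases ht : t ∈ I
    · simpa [ht] using le_add_left (hFm s t)
    simp [hF0 s t hs ht]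
  have hleft : Measurable (Function.uncurry fun s t => I.indicator 1 s * m (s - t)) :=
    (hind.comp measurable_fst).mul (hm.comp (measurable_fst.sub measurable_snd))
  have hright : Measurable (Function.uncurry fun s t => I.indicator 1 t * m (s - t)) :=
    (hind.comp measurable_snd).mul (hm.comp (measurable_fst.sub measurable_snd))
  calc ∫⁻ s, ∫⁻ t, F s t
      ≤ ∫⁻ s, ∫⁻ t, (I.indicator 1 s * m (s - t) + I.indicator 1 t * m (s - t)) := by
        gcongr with s t; exact hF s t
    _ = ∫⁻ s, ((∫⁻ t, I.indicator 1 s * m (s - t)) + ∫⁻ t, I.indicator 1 t * m (s - t)) :=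
        lintegral_congr fun s => lintegral_add_left (hleft.comp measurable_prodMk_left) _
    _ = (∫⁻ s, ∫⁻ t, I.indicator 1 s * m (s - t)) + ∫⁻ s, ∫⁻ t, I.indicator 1 t * m (s - t) :=
        lintegral_add_left hleft.lintegral_prod_right' _
    _ = (∫⁻ s, ∫⁻ t, I.indicator 1 s * m (s - t)) + ∫⁻ t, ∫⁻ s, I.indicator 1 t * m (s - t) := by
        rw [lintegral_lintegral_swap hright.aemeasurable]
    _ ≤ volume I * (∫⁻ u, m u) + volume I * ∫⁻ u, m u :=
        add_le_add
          (lintegral_lintegral_indicator_mul_le hI fun s => (lintegral_sub_left_eq_self m s).le)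
          (lintegral_lintegral_indicator_mul_le hI fun t => (lintegral_sub_right_eq_self m t).le)
    _ = 2 * volume I * ∫⁻ u, m u := by ring

lemma lintegral_lintegral_sq_sub_div_sq_le {f : ℝ → ℝ} {I : Set ℝ} (hI : MeasurableSet I)
    {c L δ : ℝ} (hL : 0 < L) (hδ : 0 < δ) (hLip : ∀ s t, |f s - f t| ≤ L * |s - t|)
    (hosc : ∀ s t, |f s - f t| ≤ δ) (hconst : ∀ x ∉ I, f x = c) :
    ∫⁻ s, ∫⁻ t, ENNReal.ofReal ((f s - f t) ^ 2 / (s - t) ^ 2) ≤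
      ENNReal.ofReal (4 * π * δ * L) * volume I := by
  have hr : 0 < δ / L := div_pos hδ hL
  have hm : Measurable fun u : ℝ => ENNReal.ofReal (2 * δ ^ 2 / ((δ / L) ^ 2 + u ^ 2)) :=
    ENNReal.measurable_ofReal.comp (by fun_prop)
  calc ∫⁻ s, ∫⁻ t, ENNReal.ofReal ((f s - f t) ^ 2 / (s - t) ^ 2)
      ≤ 2 * volume I * ∫⁻ u, ENNReal.ofReal (2 * δ ^ 2 / ((δ / L) ^ 2 + u ^ 2)) := by
        refine lintegral_lintegral_le_of_le_comp_sub hI hm (fun s t => ?_) fun s t hs ht => ?_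
        · exact ENNReal.ofReal_le_ofReal (sq_div_sq_le_of_abs_le hL hδ (hLip s t) (hosc s t))
        · simp [hconst s hs, hconst t ht]
    _ = ENNReal.ofReal (4 * π * δ * L) * volume I := by
        rw [lintegral_ofReal_div_sq_add_sq hr (by positivity), mul_comm _ (volume I),
          mul_assoc, mul_comm (volume I), ← ENNReal.ofReal_ofNat 2,
          ← ENNReal.ofReal_mul zero_le_two]
        congr 2
        field_simp
        ring

def trialPhase (a x : ℝ) : ℝ := a * (2 * smoothTransition ((a * x + 1) / 2) - 1)

lemma hasDerivAt_trialPhase (a x : ℝ) :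
    HasDerivAt (trialPhase a) (a ^ 2 * deriv smoothTransition ((a * x + 1) / 2)) x := by
  have hinner : HasDerivAt (fun x : ℝ => (a * x + 1) / 2) (a / 2) x := by
    simpa using (((hasDerivAt_id x).const_mul a).add_const 1).div_const 2
  have hT := ((smoothTransition.contDiff (n := 1)).differentiable one_ne_zero
    _).hasDerivAt.comp x hinner
  exact (((hT.const_mul 2).sub_const 1).const_mul a).congr_deriv (by ring)

lemma contDiff_trialPhase (a : ℝ) {n : ℕ∞} : ContDiff ℝ n (trialPhase a) :=
  contDiff_const.mul ((contDiff_const.mul (smoothTransition.contDiff.comp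
    (((contDiff_const.mul contDiff_id).add contDiff_const).div_const 2))).sub contDiff_const)

lemma abs_trialPhase_le {a : ℝ} (ha : 0 ≤ a) (x : ℝ) : |trialPhase a x| ≤ a := by
  have h0 := smoothTransition.nonneg ((a * x + 1) / 2)
  have h1 := smoothTransition.le_one ((a * x + 1) / 2)
  rw [trialPhase, abs_le]
  constructor <;> nlinarith

lemma trialPhase_of_inv_le {a x : ℝ} (ha : 0 < a) (hx : a⁻¹ ≤ x) : trialPhase a x = a := by
  have : 1 ≤ a * x := by rwa [inv_le_iff_one_le_mul₀' ha] at hx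
  rw [trialPhase, smoothTransition.one_of_one_le (by linarith)]
  ring

lemma trialPhase_of_le_neg_inv {a x : ℝ} (ha : 0 < a) (hx : x ≤ -a⁻¹) :
    trialPhase a x = -a := by
  have : a * x ≤ -1 := by
    have := mul_le_mul_of_nonneg_left hx ha.le
    rwa [mul_neg, mul_inv_cancel₀ ha.ne'] at this
  rw [trialPhase, smoothTransition.zero_of_nonpos (by linarith)]
  ring

lemma tendsto_trialPhase_atTop {a : ℝ} (ha : 0 < a) : Tendsto (trialPhase a) atTop (𝓝 a) :=
  tendsto_const_nhds.congr' <| (eventually_ge_atTop a⁻¹).mono fun _ hx =>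
    (trialPhase_of_inv_le ha hx).symm

lemma tendsto_trialPhase_atBot {a : ℝ} (ha : 0 < a) : Tendsto (trialPhase a) atBot (𝓝 (-a)) :=
  tendsto_const_nhds.congr' <| (eventually_le_atBot (-a⁻¹)).mono fun _ hx =>
    (trialPhase_of_le_neg_inv ha hx).symm

lemma cos_trialPhase_of_notMem {a x : ℝ} (ha : 0 < a) (hx : x ∉ Icc (-a⁻¹) a⁻¹) :
    cos (trialPhase a x) = cos a := by
  rw [mem_Icc, not_and_or, not_le, not_le] at hx
  rcases hx with hx | hx
  · rw [trialPhase_of_le_neg_inv ha hx.le, cos_neg]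
  · rw [trialPhase_of_inv_le ha hx.le]

lemma deriv_trialPhase_of_notMem {a x : ℝ} (ha : 0 < a) (hx : x ∉ Icc (-a⁻¹) a⁻¹) :
    deriv (trialPhase a) x = 0 := by
  rw [mem_Icc, not_and_or, not_le, not_le] at hx
  rcases hx with hx | hx
  · have : trialPhase a =ᶠ[𝓝 x] fun _ => -a :=
      eventually_of_mem (Iio_mem_nhds hx) fun y hy => trialPhase_of_le_neg_inv ha (le_of_lt hy)
    rw [this.deriv_eq, deriv_const]
  · have : trialPhase a =ᶠ[𝓝 x] fun _ => a :=
      eventually_of_mem (Ioi_mem_nhds hx) fun y hy => trialPhase_of_inv_le ha (le_of_lt hy)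
    rw [this.deriv_eq, deriv_const]

lemma abs_deriv_trialPhase_le {a M : ℝ} (hM : ∀ y, |deriv smoothTransition y| ≤ M) (x : ℝ) :
    |deriv (trialPhase a) x| ≤ M * a ^ 2 := by
  rw [(hasDerivAt_trialPhase a x).deriv, abs_mul, abs_of_nonneg (sq_nonneg a), mul_comm]
  gcongr
  exact hM _

lemma abs_cos_trialPhase_sub_le {a M : ℝ} (ha : 0 ≤ a)
    (hM : ∀ y, |deriv smoothTransition y| ≤ M) (s t : ℝ) :
    |cos (trialPhase a s) - cos (trialPhase a t)| ≤ M * a ^ 3 * |s - t| := by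
  have hderiv : ∀ x, HasDerivAt (fun x => cos (trialPhase a x))
      (-sin (trialPhase a x) * deriv (trialPhase a) x) x := fun x =>
    (hasDerivAt_cos _).comp x (hasDerivAt_trialPhase a x).differentiableAt.hasDerivAt
  have hbound : ∀ x, ‖deriv (fun x => cos (trialPhase a x)) x‖ ≤ M * a ^ 3 := by
    intro x
    rw [(hderiv x).deriv, norm_mul, norm_neg, Real.norm_eq_abs, Real.norm_eq_abs]
    calc |sin (trialPhase a x)| * |deriv (trialPhase a) x|
        ≤ a * (M * a ^ 2) := by
          gcongr
          · exact abs_sin_le_abs.trans (abs_trialPhase_le ha x)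
          · exact abs_deriv_trialPhase_le hM x
      _ = M * a ^ 3 := by ring
  simpa only [Real.norm_eq_abs] using convex_univ.norm_image_sub_le_of_norm_deriv_le
    (fun x _ => (hderiv x).differentiableAt) (fun x _ => hbound x) (mem_univ t) (mem_univ s)

lemma cos_le_cos_trialPhase {a : ℝ} (ha : 0 ≤ a) (haπ : a ≤ π) (x : ℝ) :
    cos a ≤ cos (trialPhase a x) := by
  rw [← cos_abs (trialPhase a x)]
  exact cos_le_cos_of_nonneg_of_le_pi (abs_nonneg _) haπ (abs_trialPhase_le ha x)

lemma two_mul_Wpot {h : ℝ} (hh : h ≤ 1) (θ : ℝ) : 2 * Wpot h θ = (cos θ - h) ^ 2 := by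
  rw [Wpot, kparam, min_eq_left hh]
  ring

lemma lintegral_ofReal_le_mul_volume {g : ℝ → ℝ} {I : Set ℝ} (hI : MeasurableSet I) {B : ℝ}
    (hB : ∀ x ∈ I, g x ≤ B) (hg : ∀ x ∉ I, g x = 0) :
    ∫⁻ x, ENNReal.ofReal (g x) ≤ ENNReal.ofReal B * volume I := by
  calc ∫⁻ x, ENNReal.ofReal (g x) ≤ ∫⁻ x, I.indicator (fun _ => ENNReal.ofReal B) x := by
        refine lintegral_mono fun x => ?_
        by_cases hx : x ∈ I
        · simpa [hx] using ENNReal.ofReal_le_ofReal (hB x hx)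
        · simp [hx, hg x hx]
    _ = ENNReal.ofReal B * volume I := lintegral_indicator_const hI _

section TrialPhaseEnergy

variable {a M : ℝ} (ha : 0 < a) (haπ : a ≤ π) (hM : ∀ y, |deriv smoothTransition y| ≤ M)
include ha haπ hM

lemma lintegral_exchange_anisotropy_trialPhase_le :
    ∫⁻ x, ENNReal.ofReal ((deriv (trialPhase a) x) ^ 2 + 2 * Wpot (cos a) (trialPhase a x)) ≤
      ENNReal.ofReal ((M ^ 2 + 1 / 4) * a ^ 4) * volume (Icc (-a⁻¹) a⁻¹) := by
  refine lintegral_ofReal_le_mul_volume measurableSet_Icc (fun x _ => ?_) fun x hx => ?_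
  · have hderiv : (deriv (trialPhase a) x) ^ 2 ≤ (M * a ^ 2) ^ 2 := by
      simpa only [sq_abs] using pow_le_pow_left₀ (abs_nonneg _) (abs_deriv_trialPhase_le hM x) 2
    have hlow := cos_le_cos_trialPhase ha.le haπ x
    have hup := cos_le_one (trialPhase a x)
    have hcos := one_sub_sq_div_two_le_cos (x := a)
    rw [two_mul_Wpot (cos_le_one a)]
    nlinarith
  · rw [deriv_trialPhase_of_notMem ha hx, two_mul_Wpot (cos_le_one a),
      cos_trialPhase_of_notMem ha hx]
    ring

lemma lintegral_lintegral_cos_trialPhase_le (hM0 : 0 < M) :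
    ∫⁻ s, ∫⁻ t, ENNReal.ofReal
        ((cos (trialPhase a s) - cos (trialPhase a t)) ^ 2 / (s - t) ^ 2) ≤
      ENNReal.ofReal (4 * π * (a ^ 2 / 2) * (M * a ^ 3)) * volume (Icc (-a⁻¹) a⁻¹) := by
  refine lintegral_lintegral_sq_sub_div_sq_le (f := fun x => cos (trialPhase a x))
    measurableSet_Icc (by positivity) (by positivity) (abs_cos_trialPhase_sub_le ha.le hM)
    (fun s t => ?_) fun x hx => cos_trialPhase_of_notMem ha hx
  have hcos := one_sub_sq_div_two_le_cos (x := a)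
  have hs := cos_le_cos_trialPhase ha.le haπ s
  have ht := cos_le_cos_trialPhase ha.le haπ t
  have hs' := cos_le_one (trialPhase a s)
  have ht' := cos_le_one (trialPhase a t)
  rw [abs_sub_le_iff]
  constructor <;> linarith

lemma energy_trialPhase_le (hM0 : 0 < M) :
    energy (cos a) (trialPhase a) ≤ ENNReal.ofReal ((M ^ 2 + 1 / 4) * a ^ 3 + M * a ^ 4) := by
  have hlocal := lintegral_exchange_anisotropy_trialPhase_le ha haπ hM
  have hstray := lintegral_lintegral_cos_trialPhase_le ha haπ hM hM0
  rw [Real.volume_Icc, sub_neg_eq_add] at hlocal hstray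
  calc energy (cos a) (trialPhase a)
      ≤ ENNReal.ofReal (1 / 2) * (ENNReal.ofReal ((M ^ 2 + 1 / 4) * a ^ 4) *
            ENNReal.ofReal (a⁻¹ + a⁻¹)) +
          ENNReal.ofReal (1 / (4 * π)) * (ENNReal.ofReal (4 * π * (a ^ 2 / 2) * (M * a ^ 3)) *
            ENNReal.ofReal (a⁻¹ + a⁻¹)) := by
        unfold energy
        gcongr
    _ = ENNReal.ofReal ((M ^ 2 + 1 / 4) * a ^ 3 + M * a ^ 4) := by
        rw [← ENNReal.ofReal_mul, ← ENNReal.ofReal_mul, ← ENNReal.ofReal_mul,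
          ← ENNReal.ofReal_mul, ← ENNReal.ofReal_add]
        · congr 1
          field_simp
          ring
        all_goals positivity

end TrialPhaseEnergy

lemma mem_AA_alphaParam_div_pi {h : ℝ} {φ : ℝ → ℝ} (hφ : ContDiff ℝ 1 φ)
    (htop : Tendsto φ atTop (𝓝 (alphaParam h))) (hbot : Tendsto φ atBot (𝓝 (-alphaParam h)))
    (hE : energy h φ < ⊤) : φ ∈ AA h (alphaParam h / π) := by
  refine ⟨⟨hφ, ⟨_, ⟨0, Or.inl ?_⟩, htop⟩, ⟨_, ⟨0, Or.inr ?_⟩, hbot⟩, hE⟩, ?_⟩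
  · simp
  · simp
  · rw [deg, htop.limUnder_eq, hbot.limUnder_eq]
    field_simp
    ring

/-- **Cubic growth in `α`.** There is a universal `C > 0` with
`ℰ_h(α/π) ≤ C α³` for all `h ∈ [0,1)`. -/
theorem cubic_growth :
    ∃ C : ℝ, 0 < C ∧ ∀ h : ℝ, 0 ≤ h → h < 1 →
      Einf h (alphaParam h / Real.pi) ≤ ENNReal.ofReal (C * (alphaParam h)^3) := by
  obtain ⟨M, hM0, hM⟩ := exists_abs_deriv_smoothTransition_le
  refine ⟨M ^ 2 + 1 / 4 + π / 2 * M, by positivity, fun h hh0 hh1 => ?_⟩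
  have hα : alphaParam h = arccos h := by rw [alphaParam, kparam, min_eq_left hh1.le]
  have ha0 : 0 < alphaParam h := hα ▸ arccos_pos.2 hh1
  have haπ : alphaParam h ≤ π / 2 := hα ▸ arccos_le_pi_div_two.2 hh0
  have hcos : cos (alphaParam h) = h := hα ▸ cos_arccos (by linarith) hh1.le
  set a := alphaParam h
  have hE := energy_trialPhase_le ha0 (by linarith) hM hM0
  rw [hcos] at hE
  calc Einf h (a / π) ≤ energy h (trialPhase a) :=
        iInf₂_le _ <| mem_AA_alphaParam_div_pi (contDiff_trialPhase a)
          (tendsto_trialPhase_atTop ha0) (tendsto_trialPhase_atBot ha0)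
          (hE.trans_lt ENNReal.ofReal_lt_top)
    _ ≤ ENNReal.ofReal ((M ^ 2 + 1 / 4) * a ^ 3 + M * a ^ 4) := hE
    _ ≤ ENNReal.ofReal ((M ^ 2 + 1 / 4 + π / 2 * M) * a ^ 3) := by
        gcongr
        nlinarith [mul_le_mul_of_nonneg_left haπ (by positivity : 0 ≤ M * a ^ 3)]
end
end

section
/- There exists a universal constant γ > 0 such that: (i) for every α ∈ (0, π/2] and every θ ∈ [−π, π], (1/2)(cos θ − cos α)² ≥ γ²(θ² − α²)²; and (ii) for every h > 1 and every θ ∈ [−π, π], (1/2)(cos²θ − 2h cos θ + 2h − 1) ≥ (h − 1)(1 − cos θ) ≥ (h − 1)γ²θ². -/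
open Real MeasureTheory Filter Topology
open scoped ENNReal NNReal

noncomputable section

private lemma sin_ge_quarter {x : ℝ} (h0 : 0 ≤ x) (h1 : x ≤ 3*Real.pi/4) :
    x/4 ≤ Real.sin x := by
  rcases le_or_gt x (Real.pi/2) with h | h
  · have hpi : (2:ℝ) < Real.pi := by linarith [Real.pi_gt_three]
    have h2 := Real.mul_le_sin h0 h
    have hq : (1:ℝ)/4 ≤ 2/Real.pi := by
      rw [div_le_div_iff₀ (by norm_num) (by linarith)]
      linarith [Real.pi_lt_d2]
    have : x/4 ≤ 2/Real.pi * x := by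
      rw [div_eq_mul_inv, mul_comm]
      exact mul_le_mul_of_nonneg_right (by simpa using hq) h0
    linarith
  · have hx4 : Real.pi/4 ≤ Real.pi - x := by linarith
    have hs : Real.sin (Real.pi/4) ≤ Real.sin (Real.pi - x) := by
      apply Real.strictMonoOn_sin.monotoneOn
      · constructor
        · linarith [Real.pi_pos]
        · linarith [Real.pi_pos]
      · constructor
        · linarith [Real.pi_pos]
        · linarith
      · exact hx4
    rw [Real.sin_pi_sub, Real.sin_pi_div_four] at hs
    have hsq : (1.4:ℝ) ≤ Real.sqrt 2 := by
      rw [show (1.4:ℝ) = Real.sqrt (1.4^2) by rw [Real.sqrt_sq]; norm_num]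
      exact Real.sqrt_le_sqrt (by norm_num)
    have hpi : Real.pi < 3.15 := Real.pi_lt_d2
    linarith

private lemma sin_sq_ge {x : ℝ} (h1 : |x| ≤ 3*Real.pi/4) :
    x^2/16 ≤ Real.sin x ^ 2 := by
  rcases le_or_gt 0 x with h | h
  · rw [abs_of_nonneg h] at h1
    have h2 := sin_ge_quarter h h1
    nlinarith
  · rw [abs_of_neg h] at h1
    have h2 := sin_ge_quarter (by linarith : 0 ≤ -x) h1
    rw [Real.sin_neg] at h2
    nlinarith

/-- Quadratic growth of the anisotropy potential near its zeros,
with a universal constant `γ`. -/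
theorem potential_quadratic_growth :
    ∃ γ : ℝ, 0 < γ ∧
      (∀ α ∈ Set.Ioc (0:ℝ) (Real.pi/2), ∀ θ ∈ Set.Icc (-Real.pi) Real.pi,
        γ^2 * (θ^2 - α^2)^2 ≤ (1/2) * (Real.cos θ - Real.cos α)^2) ∧
      (∀ h : ℝ, 1 < h → ∀ θ ∈ Set.Icc (-Real.pi) Real.pi,
        (h - 1) * (1 - Real.cos θ) ≤
            (1/2) * ((Real.cos θ)^2 - 2*h*Real.cos θ + 2*h - 1) ∧
          (h - 1) * γ^2 * θ^2 ≤ (h - 1) * (1 - Real.cos θ)) := by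
  refine ⟨1/64, by norm_num, ?_, ?_⟩
  · rintro α ⟨hα0, hα1⟩ θ ⟨hθ0, hθ1⟩
    have hπ := Real.pi_pos
    have hcc : Real.cos θ - Real.cos α
        = -2 * Real.sin ((θ + α)/2) * Real.sin ((θ - α)/2) := Real.cos_sub_cos θ α
    have h1 : ((θ + α)/2)^2/16 ≤ Real.sin ((θ + α)/2) ^ 2 := by
      apply sin_sq_ge
      rw [abs_le]; constructor <;> [linarith; linarith]
    have h2 : ((θ - α)/2)^2/16 ≤ Real.sin ((θ - α)/2) ^ 2 := by
      apply sin_sq_ge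
      rw [abs_le]; constructor <;> [linarith; linarith]
    have hsq := sq_nonneg ((θ + α)/2)
    have hsq' := sq_nonneg ((θ - α)/2)
    have key : (θ^2 - α^2)^2 / 1024
        ≤ 4 * (Real.sin ((θ + α)/2) ^ 2 * Real.sin ((θ - α)/2) ^ 2) := by
      have := mul_le_mul h1 h2 (by positivity) (sq_nonneg _)
      nlinarith [this]
    calc (1/64:ℝ)^2 * (θ^2 - α^2)^2 ≤ (θ^2 - α^2)^2 / 2048 := by
            nlinarith [sq_nonneg (θ^2 - α^2)]
      _ ≤ (1/2) * (Real.cos θ - Real.cos α)^2 := by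
            rw [hcc]; nlinarith [key]
  · rintro h hh θ ⟨hθ0, hθ1⟩
    have hπ := Real.pi_pos
    constructor
    · nlinarith [sq_nonneg (1 - Real.cos θ)]
    · have hhalf : Real.sin (θ/2) ^ 2 = (1 - Real.cos θ)/2 := by
        rw [Real.sin_sq_eq_half_sub, show 2*(θ/2) = θ by ring]; ring
      have h2 : (θ/2)^2/16 ≤ Real.sin (θ/2) ^ 2 := by
        apply sin_sq_ge
        rw [abs_le]; constructor <;> [linarith; linarith]
      rw [hhalf] at h2
      nlinarith [sq_nonneg θ]
end
end

section
/- For any c > 0 and C > 0 there exists R > 0 with the following property: for every h ≥ 0 with h ≠ 1 (with k = min{h,1}), every admissible phase φ with E_h(φ) ≤ C, and every a ∈ ℝ with |cos φ(a) − k| ≥ c, one has |cos φ(x) − k| ≥ c/2 for all x ∈ (a − R, a + R), and ∫_{a−R}^{a+R} W_h(φ(x)) dx ≥ (1/2)∫_{a−R}^{a+R} (k − cos φ(x))² dx ≥ c²R/4. -/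
open Real MeasureTheory Filter Topology
open scoped ENNReal NNReal

noncomputable section

/-!
Finite energy bounds `∫ φ'² ≤ 2C`, so by Young's inequality `|φ'| ≤ φ'²/(2ε) + ε/2` the
phase is uniformly `1/2`-Hölder: `|φ v - φ u| ≤ δ` whenever `|v - u| ≤ δ² / (2C)`. Since `cos`
is `1`-Lipschitz, a deflection `|cos φ(a) - k| ≥ c` therefore persists, halved, on an interval
of radius `R = c² / (8C)` around `a`, and there `W_h(φ) ≥ ½ (k - cos φ)² ≥ c²/8`.
-/

open Set

lemma Wpot_sub_half_sq_sub_cos (h θ : ℝ) :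
    Wpot h θ - 1 / 2 * (kparam h - cos θ) ^ 2 = (h - kparam h) * (kparam h - cos θ) := by
  unfold Wpot
  ring

lemma half_sq_sub_cos_le_Wpot (h θ : ℝ) :
    1 / 2 * (kparam h - cos θ) ^ 2 ≤ Wpot h θ := by
  have hprod : 0 ≤ (h - kparam h) * (kparam h - cos θ) := by
    rcases le_total h 1 with h1 | h1
    · simp [kparam, min_eq_left h1]
    · rw [kparam, min_eq_right h1]
      exact mul_nonneg (by linarith) (by linarith [cos_le_one θ])
  linarith [Wpot_sub_half_sq_sub_cos h θ]

lemma Wpot_nonneg (h θ : ℝ) : 0 ≤ Wpot h θ :=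
  (by positivity : (0 : ℝ) ≤ 1 / 2 * (kparam h - cos θ) ^ 2).trans
    (half_sq_sub_cos_le_Wpot h θ)

lemma continuous_Wpot (h : ℝ) : Continuous (Wpot h) := by
  unfold Wpot
  fun_prop

lemma lintegral_deriv_sq_le_of_energy_le {h C : ℝ} {φ : ℝ → ℝ}
    (hE : energy h φ ≤ ENNReal.ofReal C) :
    ∫⁻ x, ENNReal.ofReal (deriv φ x ^ 2) ≤ ENNReal.ofReal (2 * C) := by
  set I := ∫⁻ x, ENNReal.ofReal (deriv φ x ^ 2 + 2 * Wpot h (φ x))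
  calc ∫⁻ x, ENNReal.ofReal (deriv φ x ^ 2)
      ≤ I := lintegral_mono fun x =>
        ENNReal.ofReal_le_ofReal (le_add_of_nonneg_right (by linarith [Wpot_nonneg h (φ x)]))
    _ = ENNReal.ofReal 2 * (ENNReal.ofReal (1 / 2) * I) := by
        rw [← mul_assoc, ← ENNReal.ofReal_mul (by norm_num)]
        norm_num
    _ ≤ ENNReal.ofReal 2 * ENNReal.ofReal C := by grw [← hE, energy, ← le_self_add]
    _ = ENNReal.ofReal (2 * C) := (ENNReal.ofReal_mul (by norm_num)).symm

lemma setIntegral_le_of_lintegral_ofReal_le {α : Type*} [MeasurableSpace α] {μ : Measure α}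
    {f : α → ℝ} (hf : 0 ≤ f) {M : ℝ} (hM0 : 0 ≤ M)
    (hM : ∫⁻ x, ENNReal.ofReal (f x) ∂μ ≤ ENNReal.ofReal M) (s : Set α) :
    ∫ x in s, f x ∂μ ≤ M := by
  refine (le_abs_self _).trans ((norm_integral_le_lintegral_norm f).trans ?_)
  refine ENNReal.toReal_le_of_le_ofReal hM0 ((setLIntegral_le_lintegral s _).trans ?_)
  simpa only [Real.norm_eq_abs, abs_of_nonneg (hf _)] using hM

lemma abs_le_sq_div_add {x ε : ℝ} (hε : 0 < ε) : |x| ≤ x ^ 2 / (2 * ε) + ε / 2 := by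
  rw [div_add_div _ _ (by positivity) (by positivity), le_div_iff₀ (by positivity)]
  nlinarith [sq_nonneg (|x| - ε), sq_abs x]

lemma abs_sub_le_of_integral_deriv_sq_le {φ : ℝ → ℝ} (hφ : ContDiff ℝ 1 φ) {u v M ε : ℝ}
    (huv : u ≤ v) (hε : 0 < ε) (hM : ∫ x in u..v, deriv φ x ^ 2 ≤ M) :
    |φ v - φ u| ≤ M / (2 * ε) + ε * (v - u) / 2 := by
  have hφ' : Continuous (deriv φ) := hφ.continuous_deriv le_rfl
  have hyoung : Continuous fun x => deriv φ x ^ 2 / (2 * ε) + ε / 2 := by fun_prop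
  rw [← intervalIntegral.integral_deriv_eq_sub
    (fun x _ => (hφ.differentiable one_ne_zero).differentiableAt) (hφ'.intervalIntegrable u v)]
  calc |∫ x in u..v, deriv φ x|
      ≤ ∫ x in u..v, |deriv φ x| := intervalIntegral.abs_integral_le_integral_abs huv
    _ ≤ ∫ x in u..v, (deriv φ x ^ 2 / (2 * ε) + ε / 2) :=
        intervalIntegral.integral_mono_on huv (hφ'.abs.intervalIntegrable u v)
          (hyoung.intervalIntegrable u v) fun x _ => abs_le_sq_div_add hε
    _ = (∫ x in u..v, deriv φ x ^ 2) / (2 * ε) + ε * (v - u) / 2 := by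
        rw [intervalIntegral.integral_add
          ((by fun_prop : Continuous fun x => deriv φ x ^ 2 / (2 * ε)).intervalIntegrable u v)
          intervalIntegrable_const, intervalIntegral.integral_div,
          intervalIntegral.integral_const, smul_eq_mul]
        ring
    _ ≤ M / (2 * ε) + ε * (v - u) / 2 := by gcongr

lemma abs_sub_le_of_lintegral_deriv_sq_le {φ : ℝ → ℝ} (hφ : ContDiff ℝ 1 φ) {M δ : ℝ}
    (hM : 0 < M) (hδ : 0 < δ) (hφM : ∫⁻ x, ENNReal.ofReal (deriv φ x ^ 2) ≤ ENNReal.ofReal M)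
    {u v : ℝ} (huv : |v - u| ≤ δ ^ 2 / M) : |φ v - φ u| ≤ δ := by
  wlog hle : u ≤ v generalizing u v
  · rw [abs_sub_comm] at huv ⊢
    exact this huv (le_of_not_ge hle)
  have hint : ∫ x in u..v, deriv φ x ^ 2 ≤ M := by
    rw [intervalIntegral.integral_of_le hle]
    exact setIntegral_le_of_lintegral_ofReal_le (fun x => sq_nonneg _) hM.le hφM _
  have hlen : v - u ≤ δ ^ 2 / M := by rwa [abs_of_nonneg (sub_nonneg.2 hle)] at huv
  -- Young's inequality with the optimal weight `ε = M / δ`.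
  calc |φ v - φ u| ≤ M / (2 * (M / δ)) + M / δ * (v - u) / 2 :=
        abs_sub_le_of_integral_deriv_sq_le hφ hle (by positivity) hint
    _ ≤ M / (2 * (M / δ)) + M / δ * (δ ^ 2 / M) / 2 := by gcongr
    _ = δ := by field_simp; ring

/-- Deflections of `cos φ` away from `k` cost a definite amount of
anisotropy energy on an interval of universal length. -/
theorem deflections_cost_energy (c C : ℝ) (hc : 0 < c) (hC : 0 < C) :
    ∃ R : ℝ, 0 < R ∧ ∀ h : ℝ, 0 ≤ h → h ≠ 1 → ∀ φ : ℝ → ℝ, Admissible h φ →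
      energy h φ ≤ ENNReal.ofReal C → ∀ a : ℝ, c ≤ |Real.cos (φ a) - kparam h| →
        (∀ x ∈ Set.Ioo (a - R) (a + R), c/2 ≤ |Real.cos (φ x) - kparam h|) ∧
        ((1/2) * ∫ x in (a - R)..(a + R), (kparam h - Real.cos (φ x))^2) ≤
          (∫ x in (a - R)..(a + R), Wpot h (φ x)) ∧
        c^2 * R / 4 ≤ (1/2) * ∫ x in (a - R)..(a + R), (kparam h - Real.cos (φ x))^2 := by
  refine ⟨c ^ 2 / (8 * C), by positivity, fun h _ _ φ hφ hE a ha => ?_⟩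
  set R := c ^ 2 / (8 * C)
  have hRpos : 0 < R := by positivity
  have hR : (c / 2) ^ 2 / (2 * C) = R := by ring
  have hφc : Continuous φ := hφ.1.continuous
  have hdefl : ∀ x ∈ Icc (a - R) (a + R), c / 2 ≤ |cos (φ x) - kparam h| := by
    intro x hx
    have hclose : |φ x - φ a| ≤ c / 2 :=
      abs_sub_le_of_lintegral_deriv_sq_le hφ.1 (by positivity) (by positivity)
        (lintegral_deriv_sq_le_of_energy_le hE)
        (abs_sub_le_iff.2 ⟨by linarith [hx.2], by linarith [hx.1]⟩)
    calc c / 2 = c - c / 2 := by ring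
      _ ≤ |cos (φ a) - kparam h| - |cos (φ x) - cos (φ a)| :=
          sub_le_sub ha ((abs_cos_sub_cos_le _ _).trans hclose)
      _ ≤ |cos (φ x) - kparam h| := by
          linarith [abs_sub_le (cos (φ a)) (cos (φ x)) (kparam h),
            abs_sub_comm (cos (φ a)) (cos (φ x))]
  have hsq : Continuous fun x => (kparam h - cos (φ x)) ^ 2 := by fun_prop
  refine ⟨fun x hx => hdefl x (Ioo_subset_Icc_self hx), ?_, ?_⟩
  · rw [← intervalIntegral.integral_const_mul]
    exact intervalIntegral.integral_mono_on (by linarith)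
      ((continuous_const.mul hsq).intervalIntegrable _ _)
      (((continuous_Wpot h).comp hφc).intervalIntegrable _ _)
      fun x _ => half_sq_sub_cos_le_Wpot h (φ x)
  · have hlower := intervalIntegral.integral_mono_on (by linarith : a - R ≤ a + R)
      (intervalIntegrable_const (μ := volume)) (hsq.intervalIntegrable _ _) fun x hx => by
        simpa only [abs_sub_comm, sq_abs] using pow_le_pow_left₀ (by positivity) (hdefl x hx) 2
    rw [intervalIntegral.integral_const, smul_eq_mul] at hlower
    linarith
end
end

section
/- (Repulsion between positive and negative parts.) Let f : ℝ → ℝ be measurable with [f]² < ∞, and set f₊ = max{f, 0} and f₋ = min{f, 0}. Then [f]² ≥ [f₊]² + [f₋]², and equality holds if and only if f does not change sign, i.e. f₊ = 0 almost everywhere or f₋ = 0 almost everywhere. -/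
open Real MeasureTheory Filter Topology
open scoped ENNReal NNReal

noncomputable section

/-- The squared homogeneous `H^{1/2}(ℝ)` seminorm, valued in `[0,∞]`. -/
def semiH (f : ℝ → ℝ) : ℝ≥0∞ :=
  ENNReal.ofReal (1/(2*Real.pi)) *
    ∫⁻ s : ℝ, ∫⁻ t : ℝ, ENNReal.ofReal ((f s - f t)^2 / (s - t)^2)


/-!
Since `f = f₊ + f₋` and `f₊ f₋ = 0`, the cross term
`(f₊ s - f₊ t) (f₋ s - f₋ t) = -f₊ s f₋ t - f₊ t f₋ s` is nonnegative, so expanding the square gives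
`[f]² = [f₊]² + [f₋]² + 2⟨f₊, f₋⟩` with a nonnegative kernel in `⟨f₊, f₋⟩`. That kernel is strictly
positive on `{f > 0} × {f < 0}`, so `⟨f₊, f₋⟩ = 0` exactly when one of these two sets is null.
-/

section Pairing

variable {u v : ℝ → ℝ}

def diffQuot (u v : ℝ → ℝ) (p : ℝ × ℝ) : ℝ :=
  (u p.1 - u p.2) * (v p.1 - v p.2) / (p.1 - p.2) ^ 2

/-- The pairing `⟨u, v⟩`; `ENNReal.ofReal` truncates the negative part of the kernel, so this is the
pairing of the paper only when `0 ≤ diffQuot u v`. -/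
def pairH (u v : ℝ → ℝ) : ℝ≥0∞ :=
  ENNReal.ofReal (1 / (2 * π)) *
    ∫⁻ p, ENNReal.ofReal (diffQuot u v p) ∂(volume.prod volume)

@[fun_prop]
lemma measurable_diffQuot (hu : Measurable u) (hv : Measurable v) : Measurable (diffQuot u v) := by
  unfold diffQuot
  fun_prop

lemma semiH_eq_pairH (hu : Measurable u) : semiH u = pairH u u := by
  rw [semiH, pairH, lintegral_prod _ (measurable_diffQuot hu hu).ennreal_ofReal.aemeasurable]
  simp only [diffQuot, sq]

lemma semiH_add_of_diffQuot_nonneg (hu : Measurable u) (hv : Measurable v)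
    (hnonneg : ∀ p, 0 ≤ diffQuot u v p) :
    semiH (u + v) = semiH u + semiH v + 2 * pairH u v := by
  have hkernel : ∀ p, ENNReal.ofReal (diffQuot (u + v) (u + v) p) =
      ENNReal.ofReal (diffQuot u u p) + ENNReal.ofReal (diffQuot v v p) +
        2 * ENNReal.ofReal (diffQuot u v p) := by
    intro p
    have hsq : ∀ w : ℝ → ℝ, 0 ≤ diffQuot w w p := fun w =>
      div_nonneg (mul_self_nonneg _) (sq_nonneg _)
    rw [← ENNReal.ofReal_add (hsq u) (hsq v), ← ENNReal.ofReal_ofNat 2,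
      ← ENNReal.ofReal_mul zero_le_two,
      ← ENNReal.ofReal_add (add_nonneg (hsq u) (hsq v)) (mul_nonneg zero_le_two (hnonneg p))]
    congr 1
    simp only [diffQuot, Pi.add_apply]
    ring
  rw [semiH_eq_pairH (hu.add hv), semiH_eq_pairH hu, semiH_eq_pairH hv, pairH, pairH, pairH, pairH,
    lintegral_congr hkernel, lintegral_add_left (by fun_prop), lintegral_add_left (by fun_prop),
    lintegral_const_mul _ (by fun_prop)]
  ring

lemma pairH_eq_zero_iff (hu : Measurable u) (hv : Measurable v) :
    pairH u v = 0 ↔ ∀ᵐ p ∂(volume.prod volume), diffQuot u v p ≤ 0 := by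
  have hc : ENNReal.ofReal (1 / (2 * π)) ≠ 0 := by
    rw [ne_eq, ENNReal.ofReal_eq_zero, not_le]; positivity
  rw [pairH, mul_eq_zero, or_iff_right hc,
    lintegral_eq_zero_iff (measurable_diffQuot hu hv).ennreal_ofReal]
  simp only [EventuallyEq, Pi.zero_apply, ENNReal.ofReal_eq_zero]

end Pairing

lemma max_sub_max_mul_min_sub_min_nonneg (x y : ℝ) :
    0 ≤ (max x 0 - max y 0) * (min x 0 - min y 0) := by
  rcases le_total x 0 with hx | hx <;> rcases le_total y 0 with hy | hy <;>
    simp only [max_eq_right, max_eq_left, min_eq_left, min_eq_right, hx, hy] <;> nlinarith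

lemma diffQuot_max_min_nonneg (f : ℝ → ℝ) (p : ℝ × ℝ) :
    0 ≤ diffQuot (fun x => max (f x) 0) (fun x => min (f x) 0) p :=
  div_nonneg (max_sub_max_mul_min_sub_min_nonneg _ _) (sq_nonneg _)

lemma diffQuot_max_min_pos {f : ℝ → ℝ} {s t : ℝ} (hs : max (f s) 0 ≠ 0) (ht : min (f t) 0 ≠ 0) :
    0 < diffQuot (fun x => max (f x) 0) (fun x => min (f x) 0) (s, t) := by
  have hfs : 0 < f s := by by_contra! h; exact hs (max_eq_right h)
  have hft : f t < 0 := by by_contra! h; exact ht (min_eq_right h)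
  have hst : s ≠ t := by rintro rfl; linarith
  simp only [diffQuot, max_eq_left hfs.le, max_eq_right hft.le, min_eq_right hfs.le,
    min_eq_left hft.le]
  exact div_pos (by nlinarith) (sq_pos_iff.mpr (sub_ne_zero.mpr hst))

lemma pairH_max_min_eq_zero_iff {f : ℝ → ℝ} (hf : Measurable f) :
    pairH (fun x => max (f x) 0) (fun x => min (f x) 0) = 0 ↔
      (fun x => max (f x) 0) =ᵐ[volume] 0 ∨ (fun x => min (f x) 0) =ᵐ[volume] 0 := by
  rw [pairH_eq_zero_iff (hf.max measurable_const) (hf.min measurable_const)]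
  constructor
  · intro hae
    have hnull : volume.prod volume ({x | max (f x) 0 ≠ 0} ×ˢ {x | min (f x) 0 ≠ 0}) = 0 :=
      measure_mono_null (fun p hp => not_le.mpr (diffQuot_max_min_pos hp.1 hp.2)) (ae_iff.mp hae)
    rw [Measure.prod_prod, mul_eq_zero] at hnull
    simpa only [EventuallyEq, ae_iff, Pi.zero_apply] using hnull
  · rintro (h | h) <;>
    filter_upwards [Measure.quasiMeasurePreserving_fst.ae h,
      Measure.quasiMeasurePreserving_snd.ae h] with p h₁ h₂ <;>
    simp [diffQuot, h₁, h₂]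

lemma semiH_eq_max_add_min {f : ℝ → ℝ} (hf : Measurable f) :
    semiH f = semiH (fun x => max (f x) 0) + semiH (fun x => min (f x) 0) +
      2 * pairH (fun x => max (f x) 0) (fun x => min (f x) 0) := by
  rw [← semiH_add_of_diffQuot_nonneg (hf.max measurable_const) (hf.min measurable_const)
    (diffQuot_max_min_nonneg f)]
  congr 1
  funext x
  rw [Pi.add_apply, max_add_min, add_zero]

/-- **Repulsion between positive and negative parts.** -/
theorem repulsion (f : ℝ → ℝ) (hf : Measurable f) (hfin : semiH f < ⊤) :
    semiH (fun x => max (f x) 0) + semiH (fun x => min (f x) 0) ≤ semiH f ∧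
      (semiH f = semiH (fun x => max (f x) 0) + semiH (fun x => min (f x) 0) ↔
        ((fun x => max (f x) 0) =ᵐ[volume] (0 : ℝ → ℝ) ∨
          (fun x => min (f x) 0) =ᵐ[volume] (0 : ℝ → ℝ))) := by
  have hsplit := semiH_eq_max_add_min hf
  have hle := hsplit ▸ le_self_add
  refine ⟨hle, ?_⟩
  have hne := (hle.trans_lt hfin).ne
  rw [hsplit, ← pairH_max_min_eq_zero_iff hf, ← mul_eq_zero_iff_left two_ne_zero]
  nth_rw 2 [← add_zero (semiH _ + semiH _)]
  exact ENNReal.add_right_inj hne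
end
end

section
/- Suppose f, g ∈ L²(ℝ) satisfy [f]² < ∞ and [g]² < ∞, and there exist a ∈ ℝ and R > 0 such that f = 0 almost everywhere on (a − R, ∞) and g = 0 almost everywhere on (−∞, a + R). Then the pairing ⟨f, g⟩ is well defined (the integrand is absolutely integrable) and |⟨f, g⟩| ≤ ‖f‖_{L²(ℝ)} ‖g‖_{L²(ℝ)} / (2πR√6). -/
open Real MeasureTheory Filter Topology
open scoped ENNReal NNReal

noncomputable section

/-!
If `f` lives on `(-∞, b]` and `g` on `[c, ∞)` with `b < c`, then `f g = 0`, so the numerator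
`(f s - f t) (g s - g t)` collapses to `-f s g t - f t g s`, two mirror images of one cross term.
Cauchy–Schwarz on `ℝ²` bounds the cross term by `‖f‖₂ ‖g‖₂` times the `L²` norm of the kernel
`(t - s)⁻²` over the quadrant `(-∞, b] × [c, ∞)`, which is `((c - b) √6)⁻¹` because
`∫∫ (t - s)⁻⁴ = (c - b)⁻² / 6` there.
-/

open Set

theorem lintegral_Ioi_rpow_of_lt {a c : ℝ} (ha : a < -1) (hc : 0 < c) :
    ∫⁻ t in Ioi c, ENNReal.ofReal (t ^ a) = ENNReal.ofReal (-c ^ (a + 1) / (a + 1)) := by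
  rw [← ofReal_integral_eq_lintegral_ofReal (integrableOn_Ioi_rpow_of_lt ha hc)
    ((ae_restrict_iff' measurableSet_Ioi).mpr
      (ae_of_all _ fun t ht => rpow_nonneg (hc.trans ht).le a)),
    integral_Ioi_rpow_of_lt ha hc]

theorem lintegral_Ioi_sub_rpow_of_lt {a s c : ℝ} (ha : a < -1) (hsc : s < c) :
    ∫⁻ t in Ioi c, ENNReal.ofReal ((t - s) ^ a) =
      ENNReal.ofReal (-(c - s) ^ (a + 1) / (a + 1)) := by
  have := (measurePreserving_sub_right volume s).setLIntegral_comp_preimage_emb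
    (measurableEmbedding_subRight s) (fun x => ENNReal.ofReal (x ^ a)) (Ioi (c - s))
  rw [preimage_sub_const_Ioi, sub_add_cancel] at this
  rw [this, lintegral_Ioi_rpow_of_lt ha (sub_pos.mpr hsc)]

theorem lintegral_Iio_sub_rpow_of_lt {a b c : ℝ} (ha : a < -1) (hbc : b < c) :
    ∫⁻ s in Iio b, ENNReal.ofReal ((c - s) ^ a) =
      ENNReal.ofReal (-(c - b) ^ (a + 1) / (a + 1)) := by
  have := (Measure.measurePreserving_sub_left volume c).setLIntegral_comp_preimage_emb
    (measurableEmbedding_subLeft c) (fun x => ENNReal.ofReal (x ^ a)) (Ioi (c - b))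
  rw [preimage_const_sub_Ioi, sub_sub_cancel] at this
  rw [this, lintegral_Ioi_rpow_of_lt ha (sub_pos.mpr hbc)]

theorem lintegral_Iic_prod_Ici_sub_rpow {a b c : ℝ} (ha : a < -2) (hbc : b < c) :
    ∫⁻ z in Iic b ×ˢ Ici c, ENNReal.ofReal ((z.2 - z.1) ^ a)
        ∂((volume : Measure ℝ).prod volume) =
      ENNReal.ofReal ((c - b) ^ (a + 2) / ((a + 1) * (a + 2))) := by
  have hcoef : 0 ≤ (-(a + 1))⁻¹ := inv_nonneg.mpr (by linarith)
  have hinner : ∀ s ∈ Iio b, ∫⁻ t in Ioi c, ENNReal.ofReal ((t - s) ^ a) =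
      ENNReal.ofReal (-(a + 1))⁻¹ * ENNReal.ofReal ((c - s) ^ (a + 1)) := by
    intro s hs
    rw [lintegral_Ioi_sub_rpow_of_lt (by linarith) (hs.trans hbc), ← ENNReal.ofReal_mul hcoef]
    congr 1
    field_simp
  rw [← Measure.prod_restrict, ← Measure.restrict_congr_set Iio_ae_eq_Iic,
    ← Measure.restrict_congr_set Ioi_ae_eq_Ici, lintegral_prod _ (by fun_prop),
    setLIntegral_congr_fun measurableSet_Iio hinner, lintegral_const_mul _ (by fun_prop),
    lintegral_Iio_sub_rpow_of_lt (by linarith) hbc, ← ENNReal.ofReal_mul hcoef]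
  congr 1
  rw [show a + 1 + 1 = a + 2 by ring]
  field_simp

theorem lintegral_enorm_mul_enorm_mul_le {α β E F : Type*} [MeasurableSpace α]
    [MeasurableSpace β] [NormedAddCommGroup E] [NormedAddCommGroup F] {μ : Measure α}
    {ν : Measure β} [SFinite ν] {f : α → E} {g : β → F} {K : α × β → ℝ≥0∞}
    (hf : AEStronglyMeasurable f μ) (hg : AEStronglyMeasurable g ν)
    (hK : AEMeasurable K (μ.prod ν)) :
    ∫⁻ z, ‖f z.1‖ₑ * ‖g z.2‖ₑ * K z ∂μ.prod ν ≤
      eLpNorm f 2 μ * eLpNorm g 2 ν * (∫⁻ z, K z ^ (2 : ℝ) ∂μ.prod ν) ^ (1 / 2 : ℝ) := by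
  have hfg : AEMeasurable (fun z : α × β => ‖f z.1‖ₑ * ‖g z.2‖ₑ) (μ.prod ν) :=
    (hf.enorm.comp_quasiMeasurePreserving Measure.quasiMeasurePreserving_fst).mul
      (hg.enorm.comp_quasiMeasurePreserving Measure.quasiMeasurePreserving_snd)
  refine (ENNReal.lintegral_mul_le_Lp_mul_Lq _ Real.HolderConjugate.two_two hfg hK).trans_eq ?_
  simp only [ENNReal.mul_rpow_of_nonneg _ _ zero_le_two]
  rw [lintegral_prod_mul (hf.enorm.pow_const _) (hg.enorm.pow_const _),
    ENNReal.mul_rpow_of_nonneg _ _ (by norm_num)]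
  simp [eLpNorm_eq_lintegral_rpow_enorm_toReal two_ne_zero ENNReal.ofNat_ne_top]

def quadrantKernel (b c : ℝ) : ℝ × ℝ → ℝ≥0∞ :=
  (Iic b ×ˢ Ici c).indicator fun z => ENNReal.ofReal ((z.2 - z.1) ^ (-2 : ℝ))

theorem measurable_quadrantKernel (b c : ℝ) : Measurable (quadrantKernel b c) :=
  Measurable.indicator (by fun_prop) (measurableSet_Iic.prod measurableSet_Ici)

theorem lintegral_quadrantKernel_rpow_two {b c : ℝ} (hbc : b < c) :
    (∫⁻ z, quadrantKernel b c z ^ (2 : ℝ) ∂((volume : Measure ℝ).prod volume)) ^ (1 / 2 : ℝ) =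
      ENNReal.ofReal (((c - b) * √6)⁻¹) := by
  have hpow : ∀ z, quadrantKernel b c z ^ (2 : ℝ) =
      (Iic b ×ˢ Ici c).indicator (fun z => ENNReal.ofReal ((z.2 - z.1) ^ (-4 : ℝ))) z := by
    intro z
    by_cases hz : z ∈ Iic b ×ˢ Ici c
    · have hgap : 0 ≤ z.2 - z.1 := by linarith [hz.1.out, hz.2.out]
      rw [quadrantKernel, indicator_of_mem hz, indicator_of_mem hz,
        ENNReal.ofReal_rpow_of_nonneg (rpow_nonneg hgap _) zero_le_two, ← rpow_mul hgap]
      norm_num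
    · simp [quadrantKernel, indicator_of_notMem hz]
  have hpos : 0 < c - b := sub_pos.mpr hbc
  rw [lintegral_congr hpow, lintegral_indicator (measurableSet_Iic.prod measurableSet_Ici),
    lintegral_Iic_prod_Ici_sub_rpow (by norm_num) hbc,
    ENNReal.ofReal_rpow_of_nonneg (by positivity) (by norm_num)]
  congr 1
  have hsq : (c - b) ^ ((-4 : ℝ) + 2) / ((-4 + 1) * (-4 + 2)) = ((c - b) * √6)⁻¹ ^ 2 := by
    rw [show (-4 : ℝ) + 2 = -2 by norm_num, rpow_neg hpos.le, rpow_two, inv_pow, mul_pow,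
      sq_sqrt (by norm_num), mul_inv]
    norm_num [div_eq_mul_inv]
  rw [hsq, ← sqrt_eq_rpow, sqrt_sq (by positivity)]

theorem enorm_mul_div_sq_ae_eq_quadrantKernel {f g : ℝ → ℝ} {b c : ℝ} (hbc : b < c)
    (hfs : ∀ᵐ x : ℝ, x ∈ Ioi b → f x = 0) (hgs : ∀ᵐ x : ℝ, x ∈ Iio c → g x = 0) :
    ∀ᵐ z ∂(volume : Measure ℝ).prod volume,
      ‖f z.1 * g z.2 / (z.1 - z.2) ^ 2‖ₑ = ‖f z.1‖ₑ * ‖g z.2‖ₑ * quadrantKernel b c z := by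
  filter_upwards [Measure.quasiMeasurePreserving_fst.ae hfs,
    Measure.quasiMeasurePreserving_snd.ae hgs] with z hfz hgz
  by_cases hz : z ∈ Iic b ×ˢ Ici c
  · have hgap : 0 < z.2 - z.1 := by linarith [hz.1.out, hz.2.out]
    rw [quadrantKernel, indicator_of_mem hz, Real.enorm_eq_ofReal_abs, Real.enorm_eq_ofReal_abs,
      Real.enorm_eq_ofReal_abs, ← ENNReal.ofReal_mul (abs_nonneg _),
      ← ENNReal.ofReal_mul (by positivity), rpow_neg hgap.le, rpow_two, abs_div, abs_mul,
      abs_of_nonneg (sq_nonneg (z.1 - z.2)), div_eq_mul_inv, sub_sq_comm]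
  · rw [quadrantKernel, indicator_of_notMem hz]
    rcases not_and_or.mp hz with hz | hz
    · simp [hfz (by simpa using hz)]
    · simp [hgz (by simpa using hz)]

theorem lintegral_enorm_mul_div_sq_le_of_separated {f g : ℝ → ℝ} {b c : ℝ}
    (hf : AEStronglyMeasurable f) (hg : AEStronglyMeasurable g) (hbc : b < c)
    (hfs : ∀ᵐ x : ℝ, x ∈ Ioi b → f x = 0) (hgs : ∀ᵐ x : ℝ, x ∈ Iio c → g x = 0) :
    ∫⁻ z, ‖f z.1 * g z.2 / (z.1 - z.2) ^ 2‖ₑ ∂((volume : Measure ℝ).prod volume) ≤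
      eLpNorm f 2 volume * eLpNorm g 2 volume * ENNReal.ofReal (((c - b) * √6)⁻¹) := by
  rw [lintegral_congr_ae (enorm_mul_div_sq_ae_eq_quadrantKernel hbc hfs hgs),
    ← lintegral_quadrantKernel_rpow_two hbc]
  exact lintegral_enorm_mul_enorm_mul_le hf hg (measurable_quadrantKernel b c).aemeasurable

theorem integrable_mul_div_sq_of_separated {f g : ℝ → ℝ} {b c : ℝ}
    (hf : MemLp f 2 volume) (hg : MemLp g 2 volume) (hbc : b < c)
    (hfs : ∀ᵐ x : ℝ, x ∈ Ioi b → f x = 0) (hgs : ∀ᵐ x : ℝ, x ∈ Iio c → g x = 0) :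
    Integrable (fun z : ℝ × ℝ => f z.1 * g z.2 / (z.1 - z.2) ^ 2)
      ((volume : Measure ℝ).prod volume) := by
  refine ⟨?_, ?_⟩
  · exact ((hf.1.comp_quasiMeasurePreserving Measure.quasiMeasurePreserving_fst).mul
      (hg.1.comp_quasiMeasurePreserving Measure.quasiMeasurePreserving_snd)).div₀
        (by fun_prop : Measurable fun z : ℝ × ℝ => (z.1 - z.2) ^ 2).aestronglyMeasurable
  · exact (lintegral_enorm_mul_div_sq_le_of_separated hf.1 hg.1 hbc hfs hgs).trans_lt
      (ENNReal.mul_lt_top (ENNReal.mul_lt_top hf.2 hg.2) ENNReal.ofReal_lt_top)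

theorem norm_integral_mul_div_sq_le_of_separated {f g : ℝ → ℝ} {b c : ℝ}
    (hf : MemLp f 2 volume) (hg : MemLp g 2 volume) (hbc : b < c)
    (hfs : ∀ᵐ x : ℝ, x ∈ Ioi b → f x = 0) (hgs : ∀ᵐ x : ℝ, x ∈ Iio c → g x = 0) :
    ‖∫ z, f z.1 * g z.2 / (z.1 - z.2) ^ 2 ∂((volume : Measure ℝ).prod volume)‖ ≤
      (eLpNorm f 2 volume).toReal * (eLpNorm g 2 volume).toReal / ((c - b) * √6) := by
  have hbound := (enorm_integral_le_lintegral_enorm _).trans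
    (lintegral_enorm_mul_div_sq_le_of_separated hf.1 hg.1 hbc hfs hgs)
  have hfin : eLpNorm f 2 volume * eLpNorm g 2 volume * ENNReal.ofReal (((c - b) * √6)⁻¹) < ⊤ :=
    ENNReal.mul_lt_top (ENNReal.mul_lt_top hf.2 hg.2) ENNReal.ofReal_lt_top
  calc _ = ‖∫ z, f z.1 * g z.2 / (z.1 - z.2) ^ 2 ∂((volume : Measure ℝ).prod volume)‖ₑ.toReal :=
        (toReal_enorm _).symm
    _ ≤ _ := ENNReal.toReal_mono hfin.ne hbound
    _ = _ := by
      rw [ENNReal.toReal_mul, ENNReal.toReal_mul, ENNReal.toReal_ofReal (by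
        have := sub_pos.mpr hbc; positivity), div_eq_mul_inv]

theorem sub_mul_sub_div_sq_ae_eq_of_mul_ae_eq_zero {μ : Measure ℝ} [SFinite μ] {f g : ℝ → ℝ}
    (hfg : ∀ᵐ x ∂μ, f x * g x = 0) :
    (fun z : ℝ × ℝ => (f z.1 - f z.2) * (g z.1 - g z.2) / (z.1 - z.2) ^ 2) =ᵐ[μ.prod μ]
      fun z => -(f z.1 * g z.2 / (z.1 - z.2) ^ 2) - f z.2 * g z.1 / (z.2 - z.1) ^ 2 := by
  filter_upwards [Measure.quasiMeasurePreserving_fst.ae hfg,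
    Measure.quasiMeasurePreserving_snd.ae hfg] with z h1 h2
  rw [sub_sq_comm z.2 z.1]
  linear_combination (h1 + h2) / (z.1 - z.2) ^ 2

theorem separated_supports_general (f g : ℝ → ℝ)
    (hf2 : MemLp f 2 (volume : Measure ℝ)) (hg2 : MemLp g 2 (volume : Measure ℝ))
    (a R : ℝ) (hR : 0 < R)
    (hfsupp : ∀ᵐ x : ℝ, x ∈ Set.Ioi (a - R) → f x = 0)
    (hgsupp : ∀ᵐ x : ℝ, x ∈ Set.Iio (a + R) → g x = 0) :
    Integrable (fun p : ℝ × ℝ => (f p.1 - f p.2) * (g p.1 - g p.2) / (p.1 - p.2)^2)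
      ((volume : Measure ℝ).prod volume) ∧
    |(1/(2*Real.pi)) * ∫ p : ℝ × ℝ,
        (f p.1 - f p.2) * (g p.1 - g p.2) / (p.1 - p.2)^2
          ∂((volume : Measure ℝ).prod volume)| ≤
      (eLpNorm f 2 volume).toReal * (eLpNorm g 2 volume).toReal /
        (2 * Real.pi * R * Real.sqrt 6) := by
  have hgap : a - R < a + R := by linarith
  have hcross := integrable_mul_div_sq_of_separated hf2 hg2 hgap hfsupp hgsupp
  have hbound := norm_integral_mul_div_sq_le_of_separated hf2 hg2 hgap hfsupp hgsupp
  have hfg : ∀ᵐ x : ℝ, f x * g x = 0 := by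
    filter_upwards [hfsupp, hgsupp] with x hfx hgx
    rcases lt_or_ge (a - R) x with hx | hx
    · rw [hfx hx, zero_mul]
    · rw [hgx (by simp only [mem_Iio]; linarith), mul_zero]
  have hsplit := sub_mul_sub_div_sq_ae_eq_of_mul_ae_eq_zero hfg
  have hmirror : Integrable (fun z : ℝ × ℝ => f z.2 * g z.1 / (z.2 - z.1) ^ 2)
      ((volume : Measure ℝ).prod volume) := hcross.swap
  have hmirror_eq : ∫ z, f z.2 * g z.1 / (z.2 - z.1) ^ 2 ∂((volume : Measure ℝ).prod volume) =
      ∫ z, f z.1 * g z.2 / (z.1 - z.2) ^ 2 ∂((volume : Measure ℝ).prod volume) :=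
    integral_prod_swap fun z : ℝ × ℝ => f z.1 * g z.2 / (z.1 - z.2) ^ 2
  refine ⟨(hcross.neg.sub hmirror).congr hsplit.symm, ?_⟩
  rw [integral_congr_ae hsplit,
    integral_sub (f := fun z => -(f z.1 * g z.2 / (z.1 - z.2) ^ 2)) hcross.neg hmirror,
    integral_neg, hmirror_eq]
  rw [show a + R - (a - R) = 2 * R by ring, Real.norm_eq_abs] at hbound
  generalize ∫ z, f z.1 * g z.2 / (z.1 - z.2) ^ 2 ∂((volume : Measure ℝ).prod volume) = I at hbound ⊢
  rw [show 1 / (2 * π) * (-I - I) = -(I / π) by field_simp; ring, abs_neg, abs_div,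
    abs_of_pos pi_pos, show 2 * π * R * √6 = 2 * R * √6 * π by ring, ← div_div]
  exact div_le_div_of_nonneg_right hbound pi_pos.le

/-- The `H^{1/2}` pairing of two `L²` functions with supports separated
by a gap `2R` is well defined and small. -/
theorem separated_supports (f g : ℝ → ℝ)
    (hf2 : MemLp f 2 (volume : Measure ℝ)) (hg2 : MemLp g 2 (volume : Measure ℝ))
    (hfs : semiH f < ⊤) (hgs : semiH g < ⊤)
    (a R : ℝ) (hR : 0 < R)
    (hfsupp : ∀ᵐ x : ℝ, x ∈ Set.Ioi (a - R) → f x = 0)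
    (hgsupp : ∀ᵐ x : ℝ, x ∈ Set.Iio (a + R) → g x = 0) :
    Integrable (fun p : ℝ × ℝ => (f p.1 - f p.2) * (g p.1 - g p.2) / (p.1 - p.2)^2)
      ((volume : Measure ℝ).prod volume) ∧
    |(1/(2*Real.pi)) * ∫ p : ℝ × ℝ,
        (f p.1 - f p.2) * (g p.1 - g p.2) / (p.1 - p.2)^2
          ∂((volume : Measure ℝ).prod volume)| ≤
      (eLpNorm f 2 volume).toReal * (eLpNorm g 2 volume).toReal /
        (2 * Real.pi * R * Real.sqrt 6) :=
  separated_supports_general f g hf2 hg2 a R hR hfsupp hgsupp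
end
end

section
/- (Bounds on the fundamental solution of the linearised operator.) There exists a constant C > 0 such that for every α ∈ (0, π/2] and every x ∈ ℝ with x ≠ 0, the following hold for the integrals I_n(α, x) = ∫_0^∞ tⁿ e^{−t|x|}/(t² sin²α + (t² − 1)²) dt, n = 1, 2, 3: (i) 0 ≤ (sin α/π)·I₁(α, x) ≤ C sin α/(1 + x²) + C e^{−|x|/2}; (ii) 0 ≤ (sin α/π)·I₂(α, x) ≤ C sin α/(1 + |x|³) + C e^{−|x|/2}; (iii) 0 ≤ (sin α/π)·I₃(α, x) ≤ C sin α·|log|x||/(1 + x⁴·|log|x||) + C e^{−|x|/2}. -/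
open Real MeasureTheory Filter Topology
open scoped ENNReal NNReal

noncomputable section

/-- The integral `I_n(α, x) = ∫_0^∞ tⁿ e^{−t|x|}/(t² sin²α + (t² − 1)²) dt`. -/
def Ifun (n : ℕ) (α x : ℝ) : ℝ :=
  ∫ t in Set.Ioi (0:ℝ),
    t^n * Real.exp (-t*|x|) / (t^2 * (Real.sin α)^2 + (t^2 - 1)^2)

/-!
Write `s = sin α`, `y = |x|` and split `(0, ∞)` at `1/2` and `2`. On `(0, 1/2]` the denominator
is at least `1/2`, and `∫ tⁿ e^{-ty} ≤ min (1, n!/y^{n+1})` gives the algebraic decay. On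
`(1/2, 2]` the denominator dominates `(s² + (t - 1)²)/4`, whose integral is at most `π/s`: this
cancels the prefactor `s/π` and leaves `e^{-y/2}`. On `(2, ∞)` the denominator is at least `t⁴/4`,
so the tail is `O(e^{-2y})` for `n ≤ 2`, while for `n = 3` the integrand `4 e^{-ty}/t` produces the
logarithm `|log y|` as `y → 0`.
-/

namespace FundamentalSolution

open Set
open scoped Nat

variable {n k : ℕ} {s y t : ℝ}

def kernel (n : ℕ) (s y t : ℝ) : ℝ :=
  t ^ n * exp (-t * y) / (t ^ 2 * s ^ 2 + (t ^ 2 - 1) ^ 2)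

theorem Ifun_eq_integral_kernel (n : ℕ) (α x : ℝ) :
    Ifun n α x = ∫ t in Ioi 0, kernel n (sin α) |x| t :=
  rfl

theorem kernel_nonneg (ht : 0 ≤ t) : 0 ≤ kernel n s y t := by
  unfold kernel; positivity

theorem integral_kernel_nonneg : 0 ≤ ∫ t in Ioi 0, kernel n s y t :=
  setIntegral_nonneg measurableSet_Ioi fun _ ht => kernel_nonneg (le_of_lt ht)

theorem min_le_kernel_denom (s t : ℝ) :
    min (s ^ 2 / 4) (1 / 2) ≤ t ^ 2 * s ^ 2 + (t ^ 2 - 1) ^ 2 := by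
  rcases le_or_gt (1 / 4) (t ^ 2) with ht | ht
  · exact (min_le_left _ _).trans (by nlinarith [sq_nonneg s, sq_nonneg (t ^ 2 - 1)])
  · exact (min_le_right _ _).trans (by nlinarith [mul_nonneg (sq_nonneg t) (sq_nonneg s)])

theorem integral_pow_mul_exp_neg_mul_Ioi (n : ℕ) (hy : 0 < y) :
    ∫ t in Ioi 0, t ^ n * exp (-t * y) = n ! / y ^ (n + 1) := by
  have h := Real.integral_rpow_mul_exp_neg_mul_Ioi (a := n + 1) (by positivity) hy
  simp only [add_sub_cancel_right, Real.rpow_natCast, Real.Gamma_nat_eq_factorial] at h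
  rw [show (n : ℝ) + 1 = ((n + 1 : ℕ) : ℝ) by push_cast; ring, Real.rpow_natCast] at h
  simp_rw [neg_mul, fun t : ℝ => mul_comm t y, h, one_div, inv_pow]
  ring

theorem integrableOn_pow_mul_exp_neg_mul_Ioi (n : ℕ) (hy : 0 < y) :
    IntegrableOn (fun t => t ^ n * exp (-t * y)) (Ioi 0) :=
  Integrable.of_integral_ne_zero <| by
    rw [integral_pow_mul_exp_neg_mul_Ioi n hy]; positivity

theorem integrableOn_kernel (hs : s ≠ 0) (hy : 0 < y) : IntegrableOn (kernel n s y) (Ioi 0) := by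
  have hm : 0 < min (s ^ 2 / 4) (1 / 2) := lt_min (by positivity) (by norm_num)
  refine ((integrableOn_pow_mul_exp_neg_mul_Ioi n hy).const_mul (min (s ^ 2 / 4) (1 / 2))⁻¹).mono'
    (by unfold kernel; fun_prop : Measurable (kernel n s y)).aestronglyMeasurable ?_
  filter_upwards [ae_restrict_mem measurableSet_Ioi] with t ht
  rw [Real.norm_of_nonneg (kernel_nonneg (le_of_lt ht)), kernel, div_eq_mul_inv, mul_comm]
  exact mul_le_mul_of_nonneg_right (inv_anti₀ hm (min_le_kernel_denom s t))
    (mul_nonneg (pow_nonneg (le_of_lt ht) n) (exp_pos _).le)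

theorem integral_kernel_eq_add (hs : s ≠ 0) (hy : 0 < y) :
    ∫ t in Ioi 0, kernel n s y t =
      (∫ t in Ioc 0 (1 / 2), kernel n s y t) + (∫ t in Ioc (1 / 2) 2, kernel n s y t) +
        ∫ t in Ioi 2, kernel n s y t := by
  have h := integrableOn_kernel (n := n) hs hy
  rw [← Ioc_union_Ioi_eq_Ioi (by norm_num : (0 : ℝ) ≤ 2),
    setIntegral_union (Ioc_disjoint_Ioi le_rfl) measurableSet_Ioi
      (h.mono_set Ioc_subset_Ioi_self) (h.mono_set (Ioi_subset_Ioi (by norm_num))),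
    ← Ioc_union_Ioc_eq_Ioc (by norm_num : (0 : ℝ) ≤ 1 / 2) (by norm_num : (1 / 2 : ℝ) ≤ 2),
    setIntegral_union (Ioc_disjoint_Ioc_of_le le_rfl) measurableSet_Ioc
      (h.mono_set fun t ht => ht.1)
      (h.mono_set fun t ht => ht.1.trans' (by norm_num))]

theorem kernel_le_of_mem_Ioc_zero_half (ht : t ∈ Ioc 0 (1 / 2)) :
    kernel n s y t ≤ 2 * (t ^ n * exp (-t * y)) := by
  obtain ⟨ht0, ht1⟩ := ht
  have hD : 1 / 2 ≤ t ^ 2 * s ^ 2 + (t ^ 2 - 1) ^ 2 := by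
    nlinarith [mul_nonneg (sq_nonneg t) (sq_nonneg s)]
  calc kernel n s y t ≤ t ^ n * exp (-t * y) / (1 / 2) :=
        div_le_div_of_nonneg_left (by positivity) (by norm_num) hD
    _ = 2 * (t ^ n * exp (-t * y)) := by ring

theorem integral_kernel_Ioc_zero_half_le (hy : 0 < y) :
    ∫ t in Ioc 0 (1 / 2), kernel n s y t ≤ 2 * (1 + n !) / (1 + y ^ (n + 1)) := by
  set J := ∫ t in Ioc 0 (1 / 2), t ^ n * exp (-t * y)
  have hint := integrableOn_pow_mul_exp_neg_mul_Ioi n hy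
  have hJ_le_one : J ≤ 1 := by
    have hle : ∀ t ∈ Ioc (0 : ℝ) (1 / 2), t ^ n * exp (-t * y) ≤ 1 := fun t ht =>
      mul_le_one₀ (pow_le_one₀ ht.1.le (ht.2.trans (by norm_num))) (exp_pos _).le
        (exp_le_one_iff.mpr (by nlinarith [ht.1]))
    calc J ≤ ∫ _ in Ioc (0 : ℝ) (1 / 2), (1 : ℝ) :=
          setIntegral_mono_on (hint.mono_set Ioc_subset_Ioi_self)
            (integrableOn_const (by simp)) measurableSet_Ioc hle
      _ ≤ 1 := by simp; norm_num
  have hJ_le_moment : J ≤ n ! / y ^ (n + 1) := by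
    rw [← integral_pow_mul_exp_neg_mul_Ioi n hy]
    exact setIntegral_mono_set hint
      (ae_restrict_of_forall_mem measurableSet_Ioi fun t ht =>
        mul_nonneg (pow_nonneg (le_of_lt ht) n) (exp_pos _).le)
      Ioc_subset_Ioi_self.eventuallyLE
  have hkernel : ∫ t in Ioc 0 (1 / 2), kernel n s y t ≤ 2 * J := by
    rw [← integral_const_mul]
    exact setIntegral_mono_of_nonneg (fun t ht => kernel_nonneg ht.1.le)
      (fun t ht => kernel_le_of_mem_Ioc_zero_half ht)
      ((hint.mono_set Ioc_subset_Ioi_self).const_mul 2)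
  have hyn : 0 < y ^ (n + 1) := by positivity
  rw [le_div_iff₀ hyn] at hJ_le_moment
  rw [le_div_iff₀ (by positivity)]
  nlinarith

theorem integral_inv_sq_add_sq_le {c : ℝ} (hc : 0 < c) (a b : ℝ) :
    ∫ x in a..b, (c ^ 2 + x ^ 2)⁻¹ ≤ π / c := by
  rw [integral_inv_sq_add_sq hc.ne', div_eq_inv_mul π]
  refine mul_le_mul_of_nonneg_left ?_ (inv_pos.mpr hc).le
  linarith [arctan_lt_pi_div_two (b / c), neg_pi_div_two_lt_arctan (a / c)]

theorem kernel_le_of_mem_Ioc_half_two (hs : 0 < s) (hy : 0 ≤ y) (ht : t ∈ Ioc (1 / 2) 2) :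
    kernel n s y t ≤ 2 ^ (n + 2) * exp (-y / 2) * (s ^ 2 + (t - 1) ^ 2)⁻¹ := by
  obtain ⟨ht0, ht1⟩ := ht
  have hN : t ^ n * exp (-t * y) ≤ 2 ^ n * exp (-y / 2) :=
    mul_le_mul (pow_le_pow_left₀ (by linarith) ht1 n) (exp_le_exp.mpr (by nlinarith))
      (exp_pos _).le (by positivity)
  have hD : (s ^ 2 + (t - 1) ^ 2) / 4 ≤ t ^ 2 * s ^ 2 + (t ^ 2 - 1) ^ 2 := by
    nlinarith [mul_nonneg (sq_nonneg s) (by nlinarith : (0 : ℝ) ≤ t ^ 2 - 1 / 4),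
      mul_nonneg (sq_nonneg (t - 1)) (by nlinarith : (0 : ℝ) ≤ (t + 1) ^ 2 - 1 / 4)]
  calc kernel n s y t ≤ 2 ^ n * exp (-y / 2) / ((s ^ 2 + (t - 1) ^ 2) / 4) :=
        div_le_div₀ (by positivity) hN (by positivity) hD
    _ = 2 ^ (n + 2) * exp (-y / 2) * (s ^ 2 + (t - 1) ^ 2)⁻¹ := by field_simp; ring

theorem integral_kernel_Ioc_half_two_le (hs : 0 < s) (hy : 0 ≤ y) :
    ∫ t in Ioc (1 / 2) 2, kernel n s y t ≤ 2 ^ (n + 2) * π * exp (-y / 2) / s := by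
  have hint : IntegrableOn (fun t => (s ^ 2 + (t - 1) ^ 2)⁻¹) (Ioc (1 / 2) 2) :=
    (continuous_iff_continuousAt.mpr fun t =>
      (by fun_prop : Continuous fun t : ℝ => s ^ 2 + (t - 1) ^ 2).continuousAt.inv₀
        (by positivity)).integrableOn_Ioc
  calc ∫ t in Ioc (1 / 2) 2, kernel n s y t
      ≤ ∫ t in Ioc (1 / 2) 2, 2 ^ (n + 2) * exp (-y / 2) * (s ^ 2 + (t - 1) ^ 2)⁻¹ :=
        setIntegral_mono_of_nonneg (fun t ht => kernel_nonneg (by linarith [ht.1]))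
          (fun t ht => kernel_le_of_mem_Ioc_half_two hs hy ht) (hint.const_mul _)
    _ = 2 ^ (n + 2) * exp (-y / 2) * ∫ u in (-1 / 2)..1, (s ^ 2 + u ^ 2)⁻¹ := by
        rw [integral_const_mul, ← intervalIntegral.integral_of_le (by norm_num),
          intervalIntegral.integral_comp_sub_right (fun u => (s ^ 2 + u ^ 2)⁻¹)]
        norm_num
    _ ≤ 2 ^ (n + 2) * exp (-y / 2) * (π / s) := by
        gcongr; exact integral_inv_sq_add_sq_le hs _ _
    _ = 2 ^ (n + 2) * π * exp (-y / 2) / s := by ring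

theorem kernel_le_of_two_le (hnk : n + k ≤ 4) (ht : 2 ≤ t) :
    kernel n s y t ≤ 4 * exp (-t * y) / t ^ k := by
  have ht0 : 0 < t := by linarith
  have hD : t ^ 4 / 4 ≤ t ^ 2 * s ^ 2 + (t ^ 2 - 1) ^ 2 := by
    nlinarith [sq_nonneg (t ^ 2 - 2), mul_nonneg (sq_nonneg t) (sq_nonneg s)]
  have hpow : t ^ n * t ^ k ≤ t ^ 4 := by
    rw [← pow_add]; exact pow_le_pow_right₀ (by linarith) hnk
  calc kernel n s y t ≤ t ^ n * exp (-t * y) / (t ^ 4 / 4) :=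
        div_le_div_of_nonneg_left (by positivity) (by positivity) hD
    _ ≤ 4 * exp (-t * y) / t ^ k := by
        rw [div_le_div_iff₀ (by positivity) (by positivity)]
        calc t ^ n * exp (-t * y) * t ^ k = t ^ n * t ^ k * exp (-t * y) := by ring
          _ ≤ t ^ 4 * exp (-t * y) := by gcongr
          _ = 4 * exp (-t * y) * (t ^ 4 / 4) := by ring

theorem integrableOn_exp_neg_mul_Ioi (hy : 0 < y) (a : ℝ) :
    IntegrableOn (fun t => exp (-t * y)) (Ioi a) := by
  simpa [mul_comm] using integrableOn_exp_mul_Ioi (neg_neg_of_pos hy) a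

theorem integral_exp_neg_mul_Ioi (hy : 0 < y) (a : ℝ) :
    ∫ t in Ioi a, exp (-t * y) = exp (-a * y) / y := by
  have h := integral_exp_mul_Ioi (neg_neg_of_pos hy) a
  simp only [neg_mul, neg_div_neg_eq] at h
  simpa [mul_comm] using h

theorem integral_kernel_Ioi_two_le (hn : n ≤ 2) (hy : 0 ≤ y) :
    ∫ t in Ioi 2, kernel n s y t ≤ 2 * exp (-2 * y) := by
  have hint : IntegrableOn (fun t : ℝ => t ^ (-2 : ℝ)) (Ioi 2) :=
    integrableOn_Ioi_rpow_of_lt (by norm_num) (by norm_num)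
  have hle : ∀ t ∈ Ioi (2 : ℝ), kernel n s y t ≤ 4 * exp (-2 * y) * t ^ (-2 : ℝ) := by
    intro t ht
    have ht0 : 0 < t := by linarith [mem_Ioi.mp ht]
    rw [Real.rpow_neg ht0.le, Real.rpow_two, ← div_eq_mul_inv]
    calc kernel n s y t ≤ 4 * exp (-t * y) / t ^ 2 := kernel_le_of_two_le (by omega) (le_of_lt ht)
      _ ≤ 4 * exp (-2 * y) / t ^ 2 := by
          gcongr; nlinarith [mem_Ioi.mp ht]
  calc ∫ t in Ioi 2, kernel n s y t ≤ ∫ t in Ioi (2 : ℝ), 4 * exp (-2 * y) * t ^ (-2 : ℝ) :=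
        setIntegral_mono_of_nonneg (fun t ht => kernel_nonneg (by linarith [mem_Ioi.mp ht])) hle
          (hint.const_mul _)
    _ = 2 * exp (-2 * y) := by
        rw [integral_const_mul, integral_Ioi_rpow_of_lt (by norm_num) (by norm_num)]
        norm_num [Real.rpow_neg_one]
        ring

theorem integral_kernel_three_Ioi_two_le_of_half_le (hy : 1 / 2 ≤ y) :
    ∫ t in Ioi 2, kernel 3 s y t ≤ 4 * exp (-2 * y) := by
  have hy0 : 0 < y := by linarith
  have hle : ∀ t ∈ Ioi (2 : ℝ), kernel 3 s y t ≤ 2 * exp (-t * y) := by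
    intro t ht
    have ht2 : 2 ≤ t := le_of_lt ht
    calc kernel 3 s y t ≤ 4 * exp (-t * y) / t ^ 1 := kernel_le_of_two_le le_rfl ht2
      _ ≤ 2 * exp (-t * y) := by
          rw [pow_one, div_le_iff₀ (by linarith)]; nlinarith [exp_pos (-t * y)]
  calc ∫ t in Ioi 2, kernel 3 s y t ≤ ∫ t in Ioi (2 : ℝ), 2 * exp (-t * y) :=
        setIntegral_mono_of_nonneg (fun t ht => kernel_nonneg (by linarith [mem_Ioi.mp ht])) hle
          ((integrableOn_exp_neg_mul_Ioi hy0 2).const_mul 2)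
    _ = 2 * (exp (-2 * y) / y) := by rw [integral_const_mul, integral_exp_neg_mul_Ioi hy0]
    _ ≤ 4 * exp (-2 * y) := by
        rw [mul_div_assoc', div_le_iff₀ hy0]; nlinarith [exp_pos (-2 * y)]

theorem integral_kernel_three_Ioc_two_le (hy : 0 ≤ y) {b : ℝ} (hb : 2 ≤ b) :
    ∫ t in Ioc 2 b, kernel 3 s y t ≤ 4 * log (b / 2) := by
  have hinv : IntegrableOn (fun t : ℝ => t⁻¹) (Ioc 2 b) :=
    ((continuousOn_inv₀.mono fun t ht => (two_pos.trans_le ht.1).ne').integrableOn_Icc).mono_set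
      Ioc_subset_Icc_self
  have hle : ∀ t ∈ Ioc 2 b, kernel 3 s y t ≤ 4 * t⁻¹ := by
    intro t ht
    have ht0 : 0 < t := two_pos.trans ht.1
    calc kernel 3 s y t ≤ 4 * exp (-t * y) / t ^ 1 := kernel_le_of_two_le le_rfl ht.1.le
      _ ≤ 4 * 1 / t ^ 1 := by gcongr; exact exp_le_one_iff.mpr (by nlinarith)
      _ = 4 * t⁻¹ := by ring
  calc ∫ t in Ioc 2 b, kernel 3 s y t ≤ ∫ t in Ioc 2 b, 4 * t⁻¹ :=
        setIntegral_mono_of_nonneg (fun t ht => kernel_nonneg (two_pos.trans ht.1).le) hle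
          (hinv.const_mul 4)
    _ = 4 * log (b / 2) := by
        rw [integral_const_mul, ← intervalIntegral.integral_of_le hb,
          integral_inv_of_pos two_pos (by linarith)]

theorem integral_kernel_three_Ioi_inv_le (hy : 0 < y) (hy' : y ≤ 1 / 2) :
    ∫ t in Ioi (1 / y), kernel 3 s y t ≤ 4 * exp (-1) := by
  have hy2 : 2 ≤ 1 / y := by rw [le_div_iff₀ hy]; linarith
  have hle : ∀ t ∈ Ioi (1 / y), kernel 3 s y t ≤ 4 * y * exp (-t * y) := by
    intro t ht
    have hty : 1 ≤ t * y := by rw [← div_le_iff₀ hy]; exact le_of_lt ht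
    have ht0 : 0 < t := by linarith [mem_Ioi.mp ht]
    calc kernel 3 s y t ≤ 4 * exp (-t * y) / t ^ 1 :=
          kernel_le_of_two_le le_rfl (by linarith [mem_Ioi.mp ht])
      _ ≤ 4 * y * exp (-t * y) := by
          rw [pow_one, div_le_iff₀ ht0]; nlinarith [exp_pos (-t * y)]
  calc ∫ t in Ioi (1 / y), kernel 3 s y t ≤ ∫ t in Ioi (1 / y), 4 * y * exp (-t * y) :=
        setIntegral_mono_of_nonneg
          (fun t ht => kernel_nonneg (by linarith [mem_Ioi.mp ht])) hle
          ((integrableOn_exp_neg_mul_Ioi hy _).const_mul _)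
    _ = 4 * exp (-1) := by
        rw [integral_const_mul, integral_exp_neg_mul_Ioi hy]
        field_simp

theorem integral_kernel_three_Ioi_two_le_of_lt_half (hs : s ≠ 0) (hy : 0 < y) (hy' : y < 1 / 2) :
    ∫ t in Ioi 2, kernel 3 s y t ≤ 4 * -log y + 2 := by
  have hy1 : 0 < 1 / y := one_div_pos.mpr hy
  have hy2 : 2 ≤ 1 / y := by rw [le_div_iff₀ hy]; linarith
  have hint := integrableOn_kernel (n := 3) hs hy
  rw [← Ioc_union_Ioi_eq_Ioi hy2, setIntegral_union (Ioc_disjoint_Ioi le_rfl) measurableSet_Ioi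
    (hint.mono_set fun t ht => two_pos.trans ht.1) (hint.mono_set (Ioi_subset_Ioi hy1.le))]
  have hnear := integral_kernel_three_Ioc_two_le (s := s) hy.le hy2
  have hfar := integral_kernel_three_Ioi_inv_le (s := s) hy hy'.le
  have hlog : log (1 / y / 2) ≤ -log y := by
    rw [← log_inv, inv_eq_one_div]
    exact log_le_log (half_pos hy1) (div_le_self hy1.le one_le_two)
  have he : exp (-1) ≤ 1 / 2 := by
    rw [exp_neg, inv_le_comm₀ (exp_pos 1) (by norm_num)]
    linarith [add_one_le_exp (1 : ℝ)]
  linarith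

theorem half_le_abs_log (hy : 0 < y) (h : y ≤ 1 / 2 ∨ 2 ≤ y) : 1 / 2 ≤ |log y| := by
  have hlog2 := log_two_gt_d9
  rcases h with h | h
  · have : log y ≤ -log 2 := by
      rw [← log_inv]; exact log_le_log hy (by linarith)
    rw [abs_of_neg (by linarith)]; linarith
  · have : log 2 ≤ log y := log_le_log two_pos h
    rw [abs_of_pos (by linarith)]; linarith

theorem one_add_pow_four_mul_abs_log_le_two (hy : 0 < y) (hy1 : y ≤ 1) :
    1 + y ^ 4 * |log y| ≤ 2 := by
  have h := abs_log_mul_self_lt y hy hy1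
  rw [abs_mul, abs_of_pos hy] at h
  have h3 : y ^ 3 ≤ 1 := pow_le_one₀ hy.le hy1
  have : y ^ 4 * |log y| = y ^ 3 * (|log y| * y) := by ring
  nlinarith [pow_pos hy 3]

theorem div_one_add_le_div_one_add_mul {c L u : ℝ} (hc : 0 ≤ c) (hcL : c ≤ L) (hc1 : c ≤ 1)
    (hu : 0 ≤ u) : c / (1 + u) ≤ L / (1 + u * L) := by
  have hL : 0 ≤ L := hc.trans hcL
  rw [div_le_div_iff₀ (by positivity) (by positivity)]
  nlinarith [mul_nonneg hu hL]

theorem inv_one_add_pow_four_le (hy : 0 < y) :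
    1 / (1 + y ^ 4) ≤ 2 * (|log y| / (1 + y ^ 4 * |log y|)) + 3 * exp (-y / 2) := by
  have he : 0 < exp (-y / 2) := exp_pos _
  by_cases h : y ≤ 1 / 2 ∨ 2 ≤ y
  · have := div_one_add_le_div_one_add_mul (by norm_num) (half_le_abs_log hy h) (by norm_num)
      (pow_nonneg hy.le 4)
    have : 1 / (1 + y ^ 4) = 2 * (1 / 2 / (1 + y ^ 4)) := by ring
    linarith
  · push Not at h
    have h1 : 1 / (1 + y ^ 4) ≤ 1 := by
      rw [div_le_one (by positivity)]; linarith [pow_nonneg hy.le 4]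
    have h2 : exp (-1) ≤ exp (-y / 2) := exp_le_exp.mpr (by linarith)
    have h3 : exp (-1) * exp 1 = 1 := by rw [← exp_add]; norm_num
    have hw : 0 ≤ |log y| / (1 + y ^ 4 * |log y|) := by positivity
    nlinarith [exp_one_lt_d9, exp_pos (-1)]

theorem div_pi_mul_integral_kernel_le_add (hs : 0 < s) (hy : 0 < y) :
    s / π * ∫ t in Ioi 0, kernel n s y t ≤
      s / 3 * ((∫ t in Ioc 0 (1 / 2), kernel n s y t) + ∫ t in Ioi 2, kernel n s y t) +
        2 ^ (n + 2) * exp (-y / 2) := by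
  have hA : 0 ≤ ∫ t in Ioc 0 (1 / 2), kernel n s y t :=
    setIntegral_nonneg measurableSet_Ioc fun t ht => kernel_nonneg ht.1.le
  have hT : 0 ≤ ∫ t in Ioi 2, kernel n s y t :=
    setIntegral_nonneg measurableSet_Ioi fun t ht => kernel_nonneg (by linarith [mem_Ioi.mp ht])
  have hpi : s / π ≤ s / 3 := div_le_div_of_nonneg_left hs.le (by norm_num) pi_gt_three.le
  have hB : s / π * ∫ t in Ioc (1 / 2) 2, kernel n s y t ≤ 2 ^ (n + 2) * exp (-y / 2) := by
    calc s / π * ∫ t in Ioc (1 / 2) 2, kernel n s y t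
        ≤ s / π * (2 ^ (n + 2) * π * exp (-y / 2) / s) :=
          mul_le_mul_of_nonneg_left (integral_kernel_Ioc_half_two_le hs hy.le) (by positivity)
      _ = 2 ^ (n + 2) * exp (-y / 2) := by field_simp
  have hAT := mul_le_mul_of_nonneg_right hpi (add_nonneg hA hT)
  rw [integral_kernel_eq_add hs.ne' hy]
  linarith

theorem div_pi_mul_integral_kernel_le_of_le_two (hn : n ≤ 2) (hs : 0 < s) (hs1 : s ≤ 1)
    (hy : 0 < y) :
    s / π * ∫ t in Ioi 0, kernel n s y t ≤ 64 * s / (1 + y ^ (n + 1)) + 64 * exp (-y / 2) := by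
  have hA := integral_kernel_Ioc_zero_half_le (n := n) (s := s) hy
  have hT := integral_kernel_Ioi_two_le (s := s) hn hy.le
  have hfact : (n ! : ℝ) ≤ 2 := by exact_mod_cast (Nat.factorial_le hn).trans_eq rfl
  have hpow : (2 : ℝ) ^ (n + 2) ≤ 16 :=
    (pow_le_pow_right₀ one_le_two (by omega : n + 2 ≤ 4)).trans_eq (by norm_num)
  have hE : exp (-2 * y) ≤ exp (-y / 2) := exp_le_exp.mpr (by linarith)
  have hW : 2 * (1 + n !) / (1 + y ^ (n + 1)) ≤ 6 / (1 + y ^ (n + 1)) := by gcongr; linarith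
  have hsE : s * exp (-y / 2) ≤ exp (-y / 2) := mul_le_of_le_one_left (exp_pos _).le hs1
  have hW' : 0 ≤ s / (1 + y ^ (n + 1)) := by positivity
  calc s / π * ∫ t in Ioi 0, kernel n s y t
      ≤ s / 3 * ((∫ t in Ioc 0 (1 / 2), kernel n s y t) + ∫ t in Ioi 2, kernel n s y t) +
        2 ^ (n + 2) * exp (-y / 2) := div_pi_mul_integral_kernel_le_add hs hy
    _ ≤ s / 3 * (6 / (1 + y ^ (n + 1)) + 2 * exp (-y / 2)) + 16 * exp (-y / 2) := by
        gcongr <;> linarith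
    _ = 2 * (s / (1 + y ^ (n + 1))) + 2 / 3 * (s * exp (-y / 2)) + 16 * exp (-y / 2) := by ring
    _ ≤ 64 * s / (1 + y ^ (n + 1)) + 64 * exp (-y / 2) := by
        rw [mul_div_assoc]; linarith [exp_pos (-y / 2)]

theorem integral_kernel_three_Ioi_two_le (hs : s ≠ 0) (hy : 0 < y) :
    ∫ t in Ioi 2, kernel 3 s y t ≤
      16 * (|log y| / (1 + y ^ 4 * |log y|)) + 4 * exp (-y / 2) := by
  rcases lt_or_ge y (1 / 2) with hy2 | hy2
  · have hlog : |log y| = -log y := abs_of_neg (log_neg hy (by linarith))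
    have hL := half_le_abs_log hy (Or.inl hy2.le)
    have hQ := one_add_pow_four_mul_abs_log_le_two hy (by linarith)
    have hw : |log y| / 2 ≤ |log y| / (1 + y ^ 4 * |log y|) :=
      div_le_div_of_nonneg_left (abs_nonneg _) (by positivity) hQ
    have := integral_kernel_three_Ioi_two_le_of_lt_half hs hy hy2
    linarith [exp_pos (-y / 2)]
  · have := integral_kernel_three_Ioi_two_le_of_half_le (s := s) hy2
    have : exp (-2 * y) ≤ exp (-y / 2) := exp_le_exp.mpr (by linarith)
    have : 0 ≤ |log y| / (1 + y ^ 4 * |log y|) := by positivity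
    linarith

theorem div_pi_mul_integral_kernel_three_le (hs : 0 < s) (hs1 : s ≤ 1) (hy : 0 < y) :
    s / π * ∫ t in Ioi 0, kernel 3 s y t ≤
      64 * s * |log y| / (1 + y ^ 4 * |log y|) + 64 * exp (-y / 2) := by
  have hA : ∫ t in Ioc 0 (1 / 2), kernel 3 s y t ≤ 14 * (1 / (1 + y ^ 4)) :=
    (integral_kernel_Ioc_zero_half_le hy).trans_eq (by norm_num [Nat.factorial]; ring)
  have hT := integral_kernel_three_Ioi_two_le hs.ne' hy
  have hW := inv_one_add_pow_four_le hy
  set w := |log y| / (1 + y ^ 4 * |log y|)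
  have hsE : s * exp (-y / 2) ≤ exp (-y / 2) := mul_le_of_le_one_left (exp_pos _).le hs1
  have hsw : 0 ≤ s * w := by positivity
  calc s / π * ∫ t in Ioi 0, kernel 3 s y t
      ≤ s / 3 * ((∫ t in Ioc 0 (1 / 2), kernel 3 s y t) + ∫ t in Ioi 2, kernel 3 s y t) +
        2 ^ (3 + 2) * exp (-y / 2) := div_pi_mul_integral_kernel_le_add hs hy
    _ ≤ s / 3 * (14 * (2 * w + 3 * exp (-y / 2)) + (16 * w + 4 * exp (-y / 2))) +
        32 * exp (-y / 2) := by
        gcongr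
        · linarith
        · norm_num
    _ = 44 / 3 * (s * w) + 46 / 3 * (s * exp (-y / 2)) + 32 * exp (-y / 2) := by ring
    _ ≤ 64 * s * |log y| / (1 + y ^ 4 * |log y|) + 64 * exp (-y / 2) := by
        rw [show 64 * s * |log y| / (1 + y ^ 4 * |log y|) = 64 * (s * w) by ring]
        linarith [exp_pos (-y / 2)]

end FundamentalSolution

open FundamentalSolution in
/-- Bounds on the fundamental solution of the linearised operator and
its first two derivatives. -/
theorem fundamental_solution_bounds :
    ∃ C : ℝ, 0 < C ∧ ∀ α ∈ Set.Ioc (0:ℝ) (Real.pi/2), ∀ x : ℝ, x ≠ 0 →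
      (0 ≤ Real.sin α / Real.pi * Ifun 1 α x ∧
        Real.sin α / Real.pi * Ifun 1 α x ≤
          C * Real.sin α / (1 + x^2) + C * Real.exp (-|x|/2)) ∧
      (0 ≤ Real.sin α / Real.pi * Ifun 2 α x ∧
        Real.sin α / Real.pi * Ifun 2 α x ≤
          C * Real.sin α / (1 + |x|^3) + C * Real.exp (-|x|/2)) ∧
      (0 ≤ Real.sin α / Real.pi * Ifun 3 α x ∧
        Real.sin α / Real.pi * Ifun 3 α x ≤
          C * Real.sin α * abs (Real.log (abs x)) / (1 + x^4 * abs (Real.log (abs x))) +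
            C * Real.exp (-|x|/2)) := by
  refine ⟨64, by norm_num, fun α hα x hx => ?_⟩
  have hs : 0 < sin α :=
    sin_pos_of_pos_of_lt_pi hα.1 (hα.2.trans_lt (half_lt_self pi_pos))
  have hs1 : sin α ≤ 1 := sin_le_one α
  have hy : 0 < |x| := abs_pos.mpr hx
  have hnonneg (n : ℕ) : 0 ≤ sin α / π * Ifun n α x :=
    mul_nonneg (div_nonneg hs.le pi_pos.le) integral_kernel_nonneg
  simp only [Ifun_eq_integral_kernel] at hnonneg ⊢
  refine ⟨⟨hnonneg 1, ?_⟩, ⟨hnonneg 2, ?_⟩, ⟨hnonneg 3, ?_⟩⟩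
  · simpa [sq_abs] using div_pi_mul_integral_kernel_le_of_le_two one_le_two hs hs1 hy
  · exact div_pi_mul_integral_kernel_le_of_le_two le_rfl hs hs1 hy
  · simpa [Even.pow_abs ⟨2, rfl⟩] using div_pi_mul_integral_kernel_three_le hs hs1 hy
end
end
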